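/- arXiv:2512.12111 — 4 statements merged into one kernel-verified Lean document; each statement's English description precedes it below -/
import Mathlib

section
/- For every natural number n ≥ 1, every continuous function f on [a,b], and every x in [a,b], the n-fold iterated integral of f from a to x equals (1/(n-1)!) · ∫_a^x (x-t)^{n-1} f(t) dt (Cauchy's formula for repeated integration). -/
open MeasureTheory intervalIntegral

/-- The Volterra integral operator `(I f)(x) = ∫ t in a..x, f t`. -/
noncomputable def volterra (a : ℝ) (f : ℝ → ℝ) : ℝ → ℝ :=
  fun x => ∫ t in a..x, f t

section Aux

variable (a : ℝ) (g : ℝ → ℝ) (hg : Continuous g)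

/-- Auxiliary: `H j x = ∫ t in a..x, (-t)^j * g t`. -/
noncomputable def volterraH (j : ℕ) (x : ℝ) : ℝ := ∫ t in a..x, (-t) ^ j * g t

/-- Auxiliary: `F m x = ∫ t in a..x, (x - t)^m * g t`. -/
noncomputable def volterraF (m : ℕ) (x : ℝ) : ℝ := ∫ t in a..x, (x - t) ^ m * g t

include hg in
lemma contH (j : ℕ) : Continuous fun t : ℝ => (-t) ^ j * g t :=
  (Continuous.pow continuous_neg j).mul hg

include hg in
lemma hasDerivAtH (j : ℕ) (x : ℝ) :
    HasDerivAt (volterraH a g j) ((-x) ^ j * g x) x := by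
  apply intervalIntegral.integral_hasDerivAt_right
    ((contH g hg j).intervalIntegrable _ _)
    ((contH g hg j).stronglyMeasurableAtFilter _ _)
    (contH g hg j).continuousAt

include hg in
lemma expandF (m : ℕ) (x : ℝ) :
    volterraF a g m x
      = ∑ k ∈ Finset.range (m + 1),
          (m.choose k : ℝ) * (x ^ k * volterraH a g (m - k) x) := by
  unfold volterraF volterraH
  have h1 : ∀ t : ℝ, (x - t) ^ m * g t
      = ∑ k ∈ Finset.range (m + 1),
          (m.choose k : ℝ) * (x ^ k * ((-t) ^ (m - k) * g t)) := by
    intro t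
    rw [sub_eq_add_neg, add_pow, Finset.sum_mul]
    refine Finset.sum_congr rfl fun k _ => by ring
  simp only [h1]
  rw [intervalIntegral.integral_finset_sum]
  · refine Finset.sum_congr rfl fun k _ => ?_
    rw [intervalIntegral.integral_const_mul, intervalIntegral.integral_const_mul]
  · intro k _
    exact (by fun_prop : Continuous fun t : ℝ =>
      (m.choose k : ℝ) * (x ^ k * ((-t) ^ (m - k) * g t))).intervalIntegrable _ _

include hg in
lemma contF (m : ℕ) : Continuous (volterraF a g m) := by
  have : volterraF a g m = fun x => ∑ k ∈ Finset.range (m + 1),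
      (m.choose k : ℝ) * (x ^ k * volterraH a g (m - k) x) :=
    funext fun x => expandF a g hg m x
  rw [this]
  refine continuous_finset_sum _ fun k _ => ?_
  have hH : Continuous (volterraH a g (m - k)) := by
    have := fun x => (hasDerivAtH a g hg (m - k) x).continuousAt
    exact continuous_iff_continuousAt.mpr this
  fun_prop

include hg in
lemma hasDerivAtF (m : ℕ) (x : ℝ) :
    HasDerivAt (volterraF a g (m + 1)) (((m : ℝ) + 1) * volterraF a g m x) x := by
  have hfun : volterraF a g (m + 1) = fun y => ∑ k ∈ Finset.range (m + 2),
      ((m + 1).choose k : ℝ) * (y ^ k * volterraH a g (m + 1 - k) y) :=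
    funext fun y => expandF a g hg (m + 1) y
  rw [hfun]
  have hterm : ∀ k ∈ Finset.range (m + 2),
      HasDerivAt (fun y : ℝ => ((m + 1).choose k : ℝ) * (y ^ k * volterraH a g (m + 1 - k) y))
        (((m + 1).choose k : ℝ) *
          ((k : ℝ) * x ^ (k - 1) * volterraH a g (m + 1 - k) x
            + x ^ k * ((-x) ^ (m + 1 - k) * g x))) x := by
    intro k _
    exact (((hasDerivAt_pow k x).mul (hasDerivAtH a g hg (m + 1 - k) x))).const_mul _
  have hsum := HasDerivAt.fun_sum hterm
  convert! hsum using 1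
  -- show `(m+1) * F m x` equals the sum of derivatives
  have hsplit : ∑ k ∈ Finset.range (m + 2),
      ((m + 1).choose k : ℝ) *
        ((k : ℝ) * x ^ (k - 1) * volterraH a g (m + 1 - k) x
          + x ^ k * ((-x) ^ (m + 1 - k) * g x))
      = (∑ k ∈ Finset.range (m + 2),
          ((m + 1).choose k : ℝ) * ((k : ℝ) * x ^ (k - 1) * volterraH a g (m + 1 - k) x))
        + (∑ k ∈ Finset.range (m + 2),
          ((m + 1).choose k : ℝ) * (x ^ k * (-x) ^ (m + 1 - k))) * g x := by
    rw [Finset.sum_mul, ← Finset.sum_add_distrib]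
    refine Finset.sum_congr rfl fun k _ => by ring
  have hzero : (∑ k ∈ Finset.range (m + 2),
      ((m + 1).choose k : ℝ) * (x ^ k * (-x) ^ (m + 1 - k))) = 0 := by
    have h := add_pow x (-x) (m + 1)
    simp only [add_neg_cancel, zero_pow (Nat.succ_ne_zero m)] at h
    calc ∑ k ∈ Finset.range (m + 2), ((m + 1).choose k : ℝ) * (x ^ k * (-x) ^ (m + 1 - k))
        = ∑ k ∈ Finset.range (m + 1 + 1), x ^ k * (-x) ^ (m + 1 - k) * ((m + 1).choose k : ℝ) :=
          Finset.sum_congr rfl fun k _ => by ring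
      _ = 0 := h.symm
  have hmain : (∑ k ∈ Finset.range (m + 2),
      ((m + 1).choose k : ℝ) * ((k : ℝ) * x ^ (k - 1) * volterraH a g (m + 1 - k) x))
      = ((m : ℝ) + 1) * volterraF a g m x := by
    rw [Finset.sum_range_succ']
    simp only [Nat.cast_zero, zero_mul, mul_zero, add_zero]
    rw [expandF a g hg m x, Finset.mul_sum]
    refine Finset.sum_congr rfl fun j hj => ?_
    have hchoose : ((m + 1).choose (j + 1) : ℝ) * ((j : ℝ) + 1) = ((m : ℝ) + 1) * (m.choose j) := by
      have h2 : ((m + 1) * m.choose j : ℕ) = ((m + 1).choose (j + 1) * (j + 1) : ℕ) :=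
        Nat.add_one_mul_choose_eq m j
      have h3 := congrArg (fun z : ℕ => (z : ℝ)) h2
      push_cast at h3
      linarith
    have hsub : m + 1 - (j + 1) = m - j := by omega
    rw [hsub]
    simp only [Nat.add_sub_cancel, Nat.cast_add, Nat.cast_one]
    linear_combination hchoose * (x ^ j * volterraH a g (m - j) x)
  rw [hsplit, hzero, zero_mul, add_zero, hmain]

include hg in
lemma volterra_key : ∀ (n : ℕ) (x : ℝ),
    (volterra a)^[n + 1] g x
      = (1 / (Nat.factorial n : ℝ)) * volterraF a g n x := by
  intro n
  induction n with
  | zero =>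
    intro x
    show volterra a g x = _
    simp [volterra, volterraF]
  | succ n ih =>
    intro x
    have h1 : (volterra a)^[n + 2] g x
        = ∫ t in a..x, (1 / (Nat.factorial n : ℝ)) * volterraF a g n t := by
      rw [Function.iterate_succ_apply']
      show (∫ t in a..x, (volterra a)^[n + 1] g t) = _
      exact intervalIntegral.integral_congr fun t _ => ih t
    rw [h1]
    -- both sides of the remaining identity have the same derivative and vanish at `a`
    set L : ℝ → ℝ := fun y => ∫ t in a..y, (1 / (Nat.factorial n : ℝ)) * volterraF a g n t with hL
    set R : ℝ → ℝ := fun y =>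
      (1 / (Nat.factorial (n + 1) : ℝ)) * volterraF a g (n + 1) y with hR
    have hcontInt : Continuous fun t => (1 / (Nat.factorial n : ℝ)) * volterraF a g n t :=
      continuous_const.mul (contF a g hg n)
    have hLd : ∀ y, HasDerivAt L ((1 / (Nat.factorial n : ℝ)) * volterraF a g n y) y := by
      intro y
      exact intervalIntegral.integral_hasDerivAt_right
        (hcontInt.intervalIntegrable _ _)
        (hcontInt.stronglyMeasurableAtFilter _ _)
        hcontInt.continuousAt
    have hRd : ∀ y, HasDerivAt R ((1 / (Nat.factorial n : ℝ)) * volterraF a g n y) y := by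
      intro y
      have := (hasDerivAtF a g hg n y).const_mul (1 / (Nat.factorial (n + 1) : ℝ))
      convert! this using 1
      have hfac : (Nat.factorial (n + 1) : ℝ) = ((n : ℝ) + 1) * (Nat.factorial n : ℝ) := by
        rw [Nat.factorial_succ]; push_cast; ring
      rw [hfac]
      have h1 : (Nat.factorial n : ℝ) ≠ 0 := Nat.cast_ne_zero.mpr (Nat.factorial_ne_zero n)
      have h2 : ((n : ℝ) + 1) ≠ 0 := by positivity
      field_simp
    have hDd : ∀ y, HasDerivAt (fun y => L y - R y) 0 y := by
      intro y
      have := (hLd y).fun_sub (hRd y)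
      simpa using this
    have hconst : ∀ y, L y - R y = L a - R a := by
      intro y
      exact is_const_of_deriv_eq_zero (fun z => (hDd z).differentiableAt)
        (fun z => (hDd z).deriv) y a
    have hLa : L a = 0 := by simp [hL]
    have hRa : R a = 0 := by simp [hR, volterraF]
    have := hconst x
    rw [hLa, hRa, sub_zero] at this
    have hx : L x = R x := by linarith [sub_eq_zero.mp this]
    exact hx

end Aux

/-- Cauchy's formula for repeated integration. -/
theorem cauchy_repeated_integration
    (a b : ℝ) (hab : a ≤ b) (f : ℝ → ℝ) (hf : ContinuousOn f (Set.Icc a b))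
    (n : ℕ) (hn : 1 ≤ n) (x : ℝ) (hx : x ∈ Set.Icc a b) :
    (volterra a)^[n] f x
      = ((1 : ℝ) / (Nat.factorial (n - 1))) * ∫ t in a..x, (x - t) ^ (n - 1) * f t := by
  -- extend `f` to a globally continuous function `g` by clamping
  set g : ℝ → ℝ := fun t => f (min (max t a) b) with hgdef
  have hmem : ∀ t : ℝ, min (max t a) b ∈ Set.Icc a b := fun t =>
    ⟨le_min (le_max_right t a) hab, min_le_right _ _⟩
  have hg : Continuous g :=
    hf.comp_continuous (by fun_prop) hmem
  have heq : Set.EqOn f g (Set.Icc a b) := by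
    intro t ht
    simp only [hgdef, max_eq_left ht.1, min_eq_left ht.2]
  have ha : a ∈ Set.Icc a b := ⟨le_rfl, hab⟩
  have iter_eq : ∀ m, Set.EqOn ((volterra a)^[m] f) ((volterra a)^[m] g) (Set.Icc a b) := by
    intro m
    induction m with
    | zero => simpa using heq
    | succ m ihm =>
      intro y hy
      rw [Function.iterate_succ_apply', Function.iterate_succ_apply']
      refine intervalIntegral.integral_congr fun t ht => ?_
      exact ihm (Set.uIcc_subset_Icc ha hy ht)
  obtain ⟨m, rfl⟩ : ∃ m, n = m + 1 := ⟨n - 1, by omega⟩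
  simp only [Nat.add_sub_cancel]
  rw [iter_eq (m + 1) hx, volterra_key a g hg m x]
  unfold volterraF
  congr 1
  refine intervalIntegral.integral_congr fun t ht => ?_
  rw [heq (Set.uIcc_subset_Icc ha hx ht)]
end

section
/- For the scalar commensurate fractional linear system with 0 < α < 1, the Volterra integral equation x(t) = x₀ + (1/Γ(α)) ∫_0^t (t-τ)^{α-1} (a x(τ) + b u(τ)) dτ has a unique continuous solution on [0,T] for any x₀ ∈ ℝ, a, b ∈ ℝ, and continuous input u. -/
open MeasureTheory intervalIntegral

section
open Set

namespace FracVolterra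

noncomputable def psi (α : ℝ) (F : ℝ → ℝ) (t : ℝ) : ℝ :=
  t ^ α * ∫ s in (0:ℝ)..1, (1 - s) ^ (α - 1) * F (t * s)

lemma kernel_intble {α : ℝ} (hα0 : 0 < α) {t : ℝ} {F : ℝ → ℝ} (hF : Continuous F) :
    IntervalIntegrable (fun τ => (t - τ) ^ (α - 1) * F τ) volume 0 t := by
  have h1 : IntervalIntegrable (fun τ : ℝ => (t - τ) ^ (α - 1)) volume 0 t := by
    have := ((intervalIntegrable_rpow' (by linarith : (-1:ℝ) < α - 1)
      (a := 0) (b := t)).comp_sub_left t).symm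
    simpa using this
  exact h1.mul_continuousOn hF.continuousOn

lemma psi_eq {α : ℝ} (hα0 : 0 < α) (F : ℝ → ℝ) {t : ℝ} (ht : 0 ≤ t) :
    psi α F t = ∫ τ in (0:ℝ)..t, (t - τ) ^ (α - 1) * F τ := by
  rcases eq_or_lt_of_le ht with rfl | ht
  · simp [psi, Real.zero_rpow hα0.ne']
  · have h := integral_comp_mul_left (a := (0:ℝ)) (b := 1)
      (fun τ => (t - τ) ^ (α - 1) * F τ) (ne_of_gt ht)
    simp only [mul_zero, mul_one, smul_eq_mul] at h
    have key : (∫ τ in (0:ℝ)..t, (t - τ) ^ (α - 1) * F τ)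
        = t * ∫ s in (0:ℝ)..1, (t - t * s) ^ (α - 1) * F (t * s) := by
      rw [h, ← mul_assoc, mul_inv_cancel₀ (ne_of_gt ht), one_mul]
    have h2 : (∫ s in (0:ℝ)..1, (t - t * s) ^ (α - 1) * F (t * s))
        = ∫ s in (0:ℝ)..1, t ^ (α - 1) * ((1 - s) ^ (α - 1) * F (t * s)) := by
      apply integral_congr
      intro s hs
      rw [uIcc_of_le (by norm_num : (0:ℝ) ≤ 1)] at hs
      have h1s : 0 ≤ 1 - s := by linarith [hs.2]
      dsimp only
      have e : t - t * s = t * (1 - s) := by ring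
      rw [e, Real.mul_rpow ht.le h1s]
      ring
    rw [psi, key, h2, intervalIntegral.integral_const_mul, ← mul_assoc]
    congr 1
    rw [mul_comm, ← Real.rpow_add_one (ne_of_gt ht), sub_add_cancel]

lemma oneSub_rpow_intble {α : ℝ} (hα0 : 0 < α) :
    IntervalIntegrable (fun s : ℝ => (1 - s) ^ (α - 1)) volume 0 1 := by
  have := ((intervalIntegrable_rpow' (by linarith : (-1:ℝ) < α - 1)
    (a := 0) (b := 1)).comp_sub_left 1).symm
  simpa using this

lemma psi_continuous {α : ℝ} (hα0 : 0 < α) {F : ℝ → ℝ} (hF : Continuous F)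
    {M : ℝ} (hM : ∀ x, |F x| ≤ M) : Continuous (psi α F) := by
  unfold psi
  apply Continuous.mul (Real.continuous_rpow_const hα0.le)
  apply intervalIntegral.continuous_of_dominated_interval
    (bound := fun s => (1 - s) ^ (α - 1) * M)
  · intro t
    apply Measurable.aestronglyMeasurable
    have m1 : Measurable fun s : ℝ => 1 - s := measurable_const.sub measurable_id
    have m2 : Measurable F := hF.measurable
    have m3 : Measurable fun s : ℝ => t * s := measurable_const.mul measurable_id
    measurability
  · intro t
    filter_upwards with s hs
    rw [uIoc_of_le (by norm_num : (0:ℝ) ≤ 1)] at hs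
    have h1s : 0 ≤ 1 - s := by linarith [hs.2]
    rw [Real.norm_eq_abs, abs_mul, abs_of_nonneg (Real.rpow_nonneg h1s _)]
    exact mul_le_mul_of_nonneg_left (hM _) (Real.rpow_nonneg h1s _)
  · exact (oneSub_rpow_intble hα0).mul_const M
  · filter_upwards with s _
    exact continuous_const.mul (hF.comp (continuous_id.mul continuous_const))

lemma integral_kernel_exp_le {α : ℝ} (hα0 : 0 < α) {lam t : ℝ} (hlam : 0 < lam) (ht : 0 ≤ t) :
    ∫ τ in (0:ℝ)..t, (t - τ) ^ (α - 1) * Real.exp (lam * τ)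
      ≤ Real.exp (lam * t) * ((1 / lam) ^ α * Real.Gamma α) := by
  have step1 : (∫ τ in (0:ℝ)..t, (t - τ) ^ (α - 1) * Real.exp (lam * τ))
      = Real.exp (lam * t) * ∫ s in (0:ℝ)..t, s ^ (α - 1) * Real.exp (-(lam * s)) := by
    have h := integral_comp_sub_left (a := (0:ℝ)) (b := t)
      (fun s => Real.exp (lam * t) * (s ^ (α - 1) * Real.exp (-(lam * s)))) t
    simp only [sub_zero, sub_self] at h
    calc (∫ τ in (0:ℝ)..t, (t - τ) ^ (α - 1) * Real.exp (lam * τ))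
        = ∫ τ in (0:ℝ)..t, Real.exp (lam * t) *
            ((t - τ) ^ (α - 1) * Real.exp (-(lam * (t - τ)))) := by
          apply integral_congr
          intro τ _
          dsimp only
          rw [mul_comm (Real.exp (lam * t)), mul_assoc, ← Real.exp_add]
          ring_nf
      _ = ∫ s in (0:ℝ)..t, Real.exp (lam * t) *
            (s ^ (α - 1) * Real.exp (-(lam * s))) := h
      _ = Real.exp (lam * t) * ∫ s in (0:ℝ)..t, s ^ (α - 1) * Real.exp (-(lam * s)) :=
          intervalIntegral.integral_const_mul _ _
  rw [step1]
  have hint : IntegrableOn (fun s : ℝ => s ^ (α - 1) * Real.exp (-(lam * s))) (Ioi 0) := by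
    have := integrableOn_rpow_mul_exp_neg_mul_rpow (p := 1) (s := α - 1) (b := lam)
      (by linarith) one_pos hlam
    simpa [Real.rpow_one, neg_mul] using this
  have step2 : (∫ s in (0:ℝ)..t, s ^ (α - 1) * Real.exp (-(lam * s)))
      ≤ ∫ s in Ioi (0:ℝ), s ^ (α - 1) * Real.exp (-(lam * s)) := by
    rw [intervalIntegral.integral_of_le ht]
    apply setIntegral_mono_set hint
    · filter_upwards [ae_restrict_mem measurableSet_Ioi] with s hs
      exact mul_nonneg (Real.rpow_nonneg (le_of_lt hs) _) (Real.exp_pos _).le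
    · exact HasSubset.Subset.eventuallyLE Ioc_subset_Ioi_self
  have step3 : (∫ s in Ioi (0:ℝ), s ^ (α - 1) * Real.exp (-(lam * s)))
      = (1 / lam) ^ α * Real.Gamma α := Real.integral_rpow_mul_exp_neg_mul_Ioi hα0 hlam
  rw [← step3]
  exact mul_le_mul_of_nonneg_left step2 (Real.exp_pos _).le

lemma integral_diff_bound {α : ℝ} (hα0 : 0 < α) {t lam D : ℝ} (ht : 0 ≤ t) (hlam : 0 < lam)
    (hD : 0 ≤ D) {F G : ℝ → ℝ} (hF : Continuous F) (hG : Continuous G)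
    (h : ∀ τ ∈ Icc 0 t, |F τ - G τ| ≤ D * Real.exp (lam * τ)) :
    |(∫ τ in (0:ℝ)..t, (t - τ) ^ (α - 1) * F τ) - ∫ τ in (0:ℝ)..t, (t - τ) ^ (α - 1) * G τ|
      ≤ D * (Real.exp (lam * t) * ((1 / lam) ^ α * Real.Gamma α)) := by
  have hFi := kernel_intble hα0 (t := t) hF
  have hGi := kernel_intble hα0 (t := t) hG
  have hdiff : Continuous fun τ => F τ - G τ := hF.sub hG
  rw [← intervalIntegral.integral_sub hFi hGi]
  have e1 : (∫ τ in (0:ℝ)..t, ((t - τ) ^ (α - 1) * F τ - (t - τ) ^ (α - 1) * G τ))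
      = ∫ τ in (0:ℝ)..t, (t - τ) ^ (α - 1) * (F τ - G τ) := by
    simp only [mul_sub]
  rw [e1]
  calc |∫ τ in (0:ℝ)..t, (t - τ) ^ (α - 1) * (F τ - G τ)|
      ≤ ∫ τ in (0:ℝ)..t, |(t - τ) ^ (α - 1) * (F τ - G τ)| :=
        intervalIntegral.abs_integral_le_integral_abs ht
    _ ≤ ∫ τ in (0:ℝ)..t, (t - τ) ^ (α - 1) * (D * Real.exp (lam * τ)) := by
        apply integral_mono_on ht ((kernel_intble hα0 hdiff).abs)
          (kernel_intble hα0 (continuous_const.mul (Real.continuous_exp.comp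
            (continuous_const.mul continuous_id))))
        intro τ hτ
        rw [abs_mul, abs_of_nonneg (Real.rpow_nonneg (sub_nonneg.2 hτ.2) _)]
        exact mul_le_mul_of_nonneg_left (h τ hτ) (Real.rpow_nonneg (sub_nonneg.2 hτ.2) _)
    _ = D * ∫ τ in (0:ℝ)..t, (t - τ) ^ (α - 1) * Real.exp (lam * τ) := by
        rw [← intervalIntegral.integral_const_mul]
        apply integral_congr
        intro τ _
        dsimp only
        ring
    _ ≤ D * (Real.exp (lam * t) * ((1 / lam) ^ α * Real.Gamma α)) :=
        mul_le_mul_of_nonneg_left (integral_kernel_exp_le hα0 hlam ht) hD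

end FracVolterra

end

section
open Set FracVolterra

/-- The scalar commensurate fractional linear Volterra equation
`x(t) = x₀ + (1/Γ(α)) ∫_0^t (t-τ)^{α-1} (a x(τ) + b u(τ)) dτ`
has a unique continuous solution on `[0,T]` for any continuous input `u`. -/
theorem fractional_linear_volterra_existence_uniqueness
    (T : ℝ) (hT : 0 < T) (α : ℝ) (hα0 : 0 < α) (hα1 : α < 1)
    (x₀ a b : ℝ) (u : ℝ → ℝ) (hu : Continuous u) :
    ∃ x : ℝ → ℝ,
      (ContinuousOn x (Set.Icc 0 T) ∧
        ∀ t ∈ Set.Icc (0:ℝ) T,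
          x t = x₀ + (1 / Real.Gamma α) *
            ∫ τ in (0:ℝ)..t, (t - τ) ^ (α - 1) * (a * x τ + b * u τ)) ∧
      ∀ y : ℝ → ℝ,
        (ContinuousOn y (Set.Icc 0 T) ∧
          ∀ t ∈ Set.Icc (0:ℝ) T,
            y t = x₀ + (1 / Real.Gamma α) *
              ∫ τ in (0:ℝ)..t, (t - τ) ^ (α - 1) * (a * y τ + b * u τ)) →
        ∀ t ∈ Set.Icc (0:ℝ) T, y t = x t := by
  have hΓ : 0 < Real.Gamma α := Real.Gamma_pos_of_pos hα0
  set C : ℝ := 1 / Real.Gamma α with hCdef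
  have hC0 : 0 ≤ C := by positivity
  haveI : Nonempty (Icc (0:ℝ) T) := ⟨⟨0, le_refl 0, hT.le⟩⟩
  set pj : ℝ → Icc (0:ℝ) T := projIcc 0 T hT.le with hpjdef
  let U : C(Icc (0:ℝ) T, ℝ) := ⟨fun p => u ↑p, hu.comp continuous_subtype_val⟩
  let Ff : C(Icc (0:ℝ) T, ℝ) → ℝ → ℝ := fun f τ => a * f (pj τ) + b * U (pj τ)
  have hFfc : ∀ f, Continuous (Ff f) := fun f =>
    (continuous_const.mul (f.continuous.comp continuous_projIcc)).add
      (continuous_const.mul (U.continuous.comp continuous_projIcc))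
  have hFfb : ∀ f : C(Icc (0:ℝ) T, ℝ), ∀ x : ℝ, |Ff f x| ≤ |a| * ‖f‖ + |b| * ‖U‖ := by
    intro f x
    have h1 : |f (pj x)| ≤ ‖f‖ := by
      rw [← Real.norm_eq_abs]; exact f.norm_coe_le_norm _
    have h2 : |U (pj x)| ≤ ‖U‖ := by
      rw [← Real.norm_eq_abs]; exact U.norm_coe_le_norm _
    calc |a * f (pj x) + b * U (pj x)| ≤ |a * f (pj x)| + |b * U (pj x)| := abs_add_le _ _
      _ ≤ |a| * ‖f‖ + |b| * ‖U‖ := by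
          rw [abs_mul, abs_mul]
          exact add_le_add (mul_le_mul_of_nonneg_left h1 (abs_nonneg a))
            (mul_le_mul_of_nonneg_left h2 (abs_nonneg b))
  let Φ : C(Icc (0:ℝ) T, ℝ) → C(Icc (0:ℝ) T, ℝ) := fun f =>
    ⟨fun p => x₀ + C * psi α (Ff f) ↑p,
     continuous_const.add (continuous_const.mul
       ((psi_continuous hα0 (hFfc f) (hFfb f)).comp continuous_subtype_val))⟩
  have hΦapp : ∀ (f : C(Icc (0:ℝ) T, ℝ)) (p : Icc (0:ℝ) T),
      Φ f p = x₀ + C * ∫ τ in (0:ℝ)..(p:ℝ), ((p:ℝ) - τ) ^ (α - 1) * Ff f τ := by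
    intro f p
    show x₀ + C * psi α (Ff f) ↑p = _
    rw [psi_eq hα0 _ p.2.1]
  -- the weight
  set lam : ℝ := (2 * |a| + 1) ^ (α⁻¹) with hlamdef
  have hlam : 0 < lam := Real.rpow_pos_of_pos (by positivity) _
  have hlamα : lam ^ α = 2 * |a| + 1 := by
    rw [hlamdef, ← Real.rpow_mul (by positivity), inv_mul_cancel₀ hα0.ne', Real.rpow_one]
  have hinv : (1 / lam) ^ α = (2 * |a| + 1)⁻¹ := by
    rw [one_div, Real.inv_rpow hlam.le, hlamα]
  set q : ℝ := |a| / (2 * |a| + 1) with hqdef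
  have hq0 : 0 ≤ q := by positivity
  have hq1 : q < 1 := by
    rw [hqdef]
    exact (div_lt_one (by positivity)).2 (by linarith [abs_nonneg a])
  -- main iterate estimate
  have main : ∀ n : ℕ, ∀ f g : C(Icc (0:ℝ) T, ℝ), ∀ p : Icc (0:ℝ) T,
      |Φ^[n] f p - Φ^[n] g p| ≤ dist f g * q ^ n * Real.exp (lam * ↑p) := by
    intro n
    induction n with
    | zero =>
      intro f g p
      simp only [Function.iterate_zero, id]
      have h1 : |f p - g p| ≤ dist f g := by
        rw [← Real.dist_eq]; exact ContinuousMap.dist_apply_le_dist p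
      have h2 : (1:ℝ) ≤ Real.exp (lam * ↑p) :=
        Real.one_le_exp (mul_nonneg hlam.le p.2.1)
      calc |f p - g p| ≤ dist f g := h1
        _ = dist f g * q ^ 0 * 1 := by ring
        _ ≤ dist f g * q ^ 0 * Real.exp (lam * ↑p) := by
            apply mul_le_mul_of_nonneg_left h2
            positivity
    | succ n ih =>
      intro f g p
      rw [Function.iterate_succ_apply', Function.iterate_succ_apply']
      rw [hΦapp, hΦapp]
      have e : (x₀ + C * ∫ τ in (0:ℝ)..(p:ℝ), ((p:ℝ) - τ) ^ (α - 1) * Ff (Φ^[n] f) τ)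
          - (x₀ + C * ∫ τ in (0:ℝ)..(p:ℝ), ((p:ℝ) - τ) ^ (α - 1) * Ff (Φ^[n] g) τ)
          = C * ((∫ τ in (0:ℝ)..(p:ℝ), ((p:ℝ) - τ) ^ (α - 1) * Ff (Φ^[n] f) τ)
            - ∫ τ in (0:ℝ)..(p:ℝ), ((p:ℝ) - τ) ^ (α - 1) * Ff (Φ^[n] g) τ) := by ring
      rw [e, abs_mul, abs_of_nonneg hC0]
      have hb : ∀ τ ∈ Icc (0:ℝ) (p:ℝ),
          |Ff (Φ^[n] f) τ - Ff (Φ^[n] g) τ|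
            ≤ (|a| * (dist f g * q ^ n)) * Real.exp (lam * τ) := by
        intro τ hτ
        have hτT : τ ∈ Icc (0:ℝ) T := ⟨hτ.1, le_trans hτ.2 p.2.2⟩
        have e2 : Ff (Φ^[n] f) τ - Ff (Φ^[n] g) τ
            = a * ((Φ^[n] f) (pj τ) - (Φ^[n] g) (pj τ)) := by
          show (a * (Φ^[n] f) (pj τ) + b * U (pj τ))
            - (a * (Φ^[n] g) (pj τ) + b * U (pj τ)) = _
          ring
        rw [e2, abs_mul]
        have hih := ih f g (pj τ)
        have hpj : ((pj τ : ℝ)) = τ := by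
          rw [hpjdef, projIcc_of_mem hT.le hτT]
        rw [hpj] at hih
        calc |a| * |(Φ^[n] f) (pj τ) - (Φ^[n] g) (pj τ)|
            ≤ |a| * (dist f g * q ^ n * Real.exp (lam * τ)) :=
              mul_le_mul_of_nonneg_left hih (abs_nonneg a)
          _ = (|a| * (dist f g * q ^ n)) * Real.exp (lam * τ) := by ring
      have hbd := integral_diff_bound hα0 p.2.1 hlam (by positivity)
        (hFfc (Φ^[n] f)) (hFfc (Φ^[n] g)) hb
      calc C * |(∫ τ in (0:ℝ)..(p:ℝ), ((p:ℝ) - τ) ^ (α - 1) * Ff (Φ^[n] f) τ)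
            - ∫ τ in (0:ℝ)..(p:ℝ), ((p:ℝ) - τ) ^ (α - 1) * Ff (Φ^[n] g) τ|
          ≤ C * ((|a| * (dist f g * q ^ n)) *
              (Real.exp (lam * ↑p) * ((1 / lam) ^ α * Real.Gamma α))) :=
            mul_le_mul_of_nonneg_left hbd hC0
        _ = dist f g * q ^ (n + 1) * Real.exp (lam * ↑p) := by
            rw [hinv, hCdef, hqdef, pow_succ]
            field_simp
  -- contraction of an iterate
  obtain ⟨n, hn⟩ : ∃ n : ℕ, q ^ n < (Real.exp (lam * T))⁻¹ :=
    exists_pow_lt_of_lt_one (inv_pos.2 (Real.exp_pos _)) hq1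
  set K : ℝ := q ^ n * Real.exp (lam * T) with hKdef
  have hK0 : 0 ≤ K := by positivity
  have hK1 : K < 1 := by
    rw [hKdef]
    calc q ^ n * Real.exp (lam * T) < (Real.exp (lam * T))⁻¹ * Real.exp (lam * T) :=
          mul_lt_mul_of_pos_right hn (Real.exp_pos _)
      _ = 1 := inv_mul_cancel₀ (Real.exp_pos _).ne'
  have hlip : ∀ f g : C(Icc (0:ℝ) T, ℝ), dist (Φ^[n] f) (Φ^[n] g) ≤ K * dist f g := by
    intro f g
    apply (ContinuousMap.dist_le (by positivity)).2
    intro p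
    rw [Real.dist_eq]
    calc |Φ^[n] f p - Φ^[n] g p| ≤ dist f g * q ^ n * Real.exp (lam * ↑p) := main n f g p
      _ ≤ dist f g * q ^ n * Real.exp (lam * T) := by
          apply mul_le_mul_of_nonneg_left _ (by positivity)
          exact Real.exp_le_exp.2 (mul_le_mul_of_nonneg_left p.2.2 hlam.le)
      _ = K * dist f g := by rw [hKdef]; ring
  have hcontr : ContractingWith (Real.toNNReal K) (Φ^[n]) := by
    constructor
    · rw [← Real.toNNReal_one]
      exact (Real.toNNReal_lt_toNNReal_iff one_pos).2 hK1
    · apply LipschitzWith.of_dist_le_mul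
      intro f g
      rw [Real.coe_toNNReal K hK0]
      exact hlip f g
  set z : C(Icc (0:ℝ) T, ℝ) := ContractingWith.fixedPoint (Φ^[n]) hcontr with hzdef
  have hz : Function.IsFixedPt Φ z := hcontr.isFixedPt_fixedPoint_iterate
  refine ⟨fun t => z (pj t), ⟨?_, ?_⟩, ?_⟩
  · exact (z.continuous.comp continuous_projIcc).continuousOn
  · intro t ht
    have hpt : pj t = ⟨t, ht⟩ := by rw [hpjdef, projIcc_of_mem hT.le ht]
    have h2 : Φ z ⟨t, ht⟩ = x₀ + C * ∫ τ in (0:ℝ)..t, (t - τ) ^ (α - 1) * Ff z τ :=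
      hΦapp z ⟨t, ht⟩
    show z (pj t) = _
    rw [hpt]
    conv_lhs => rw [← hz]
    rw [h2]
    congr 1
    congr 1
    apply integral_congr
    intro τ hτ
    rw [uIcc_of_le ht.1] at hτ
    have hτT : τ ∈ Icc (0:ℝ) T := ⟨hτ.1, le_trans hτ.2 ht.2⟩
    have hpjτ : pj τ = ⟨τ, hτT⟩ := by rw [hpjdef, projIcc_of_mem hT.le hτT]
    show (t - τ) ^ (α - 1) * (a * z (pj τ) + b * u ↑(pj τ))
      = (t - τ) ^ (α - 1) * (a * z (pj τ) + b * u τ)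
    rw [hpjτ]
  · rintro y ⟨hyc, hyeq⟩ t ht
    let w : C(Icc (0:ℝ) T, ℝ) := ⟨fun p => y ↑p, hyc.restrict⟩
    have hw : Function.IsFixedPt Φ w := by
      ext p
      have h2 : Φ w p = x₀ + C * ∫ τ in (0:ℝ)..(p:ℝ), ((p:ℝ) - τ) ^ (α - 1) * Ff w τ :=
        hΦapp w p
    --
      rw [h2]
      show _ = y ↑p
      rw [hyeq ↑p p.2]
      congr 1
      congr 1
      apply integral_congr
      intro τ hτ
      rw [uIcc_of_le p.2.1] at hτ
      have hτT : τ ∈ Icc (0:ℝ) T := ⟨hτ.1, le_trans hτ.2 p.2.2⟩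
      have hpjτ : pj τ = ⟨τ, hτT⟩ := by rw [hpjdef, projIcc_of_mem hT.le hτT]
      show ((p:ℝ) - τ) ^ (α - 1) * (a * w (pj τ) + b * u ↑(pj τ))
        = ((p:ℝ) - τ) ^ (α - 1) * (a * y τ + b * u τ)
      rw [hpjτ]
      rfl
    have hwz : w = z := hcontr.fixedPoint_unique (hw.iterate n)
    have hpt : pj t = ⟨t, ht⟩ := by rw [hpjdef, projIcc_of_mem hT.le ht]
    show y t = z (pj t)
    rw [hpt, ← hwz]
    rfl

end
end

section
/- More generally, if f : [0,T] × ℝⁿ → ℝⁿ is continuous in t and globally Lipschitz in x, then the Volterra equation x(t) = x₀ + (1/Γ(α)) ∫_0^t (t-τ)^{α-1} f(τ, x(τ)) dτ (with 0 < α < 1) has a unique continuous solution on [0,T], and the solution depends continuously on x₀. -/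
open MeasureTheory intervalIntegral Set
open scoped Interval

namespace FracVolterra

variable {E : Type*} [NormedAddCommGroup E] [NormedSpace ℝ E]

lemma ae_ne_restrict (s : Set ℝ) (c : ℝ) : ∀ᵐ τ ∂(volume.restrict s), τ ≠ c := by
  refine ae_restrict_of_ae ?_
  rw [ae_iff]
  simp only [ne_eq, not_not, Set.setOf_eq_eq_singleton]
  exact Real.volume_singleton

lemma ae_uIoc {t : ℝ} (ht : 0 ≤ t) {P : ℝ → Prop} (h : ∀ τ ∈ Set.Ioc 0 t, P τ) :
    ∀ᵐ τ ∂(volume.restrict (Ι 0 t)), P τ := by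
  rw [uIoc_of_le ht]
  exact (ae_restrict_iff' measurableSet_Ioc).2 (ae_of_all _ h)

lemma kernel_int {α : ℝ} (hα0 : 0 < α) (c a b : ℝ) :
    IntervalIntegrable (fun τ => (c - τ) ^ (α - 1)) volume a b := by
  have h := (intervalIntegrable_rpow' (a := c - a) (b := c - b) (r := α - 1)
    (by linarith)).comp_sub_left c
  simpa using h

lemma smul_int {α : ℝ} (hα0 : 0 < α) {g : ℝ → E} {a b : ℝ} (c : ℝ)
    (hg : ContinuousOn g (uIcc a b)) :
    IntervalIntegrable (fun τ => (c - τ) ^ (α - 1) • g τ) volume a b := by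
  have hK := (kernel_int hα0 c a b)
  rw [intervalIntegrable_iff] at hK ⊢
  obtain ⟨M, hM⟩ := isCompact_uIcc.exists_bound_of_continuousOn hg
  have hmeas : AEStronglyMeasurable g (volume.restrict (Ι a b)) :=
    (hg.aestronglyMeasurable measurableSet_uIcc).mono_measure
      (Measure.restrict_mono uIoc_subset_uIcc le_rfl)
  have hmem : MemLp g ⊤ (volume.restrict (Ι a b)) := by
    refine memLp_top_of_bound hmeas M ?_
    exact ae_restrict_of_ae_restrict_of_subset uIoc_subset_uIcc
      ((ae_restrict_iff' measurableSet_uIcc).2 (ae_of_all _ hM))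
  exact hK.smul_of_top_left hmem

lemma kernel_integral {α : ℝ} (hα0 : 0 < α) {a b c : ℝ} :
    ∫ τ in a..b, (c - τ) ^ (α - 1) = ((c - a) ^ α - (c - b) ^ α) / α := by
  have h := integral_comp_sub_left (a := a) (b := b) (fun u : ℝ => u ^ (α - 1)) c
  rw [h, integral_rpow (Or.inl (by linarith))]
  rw [sub_add_cancel]

lemma rpow_subadd {x y p : ℝ} (hx : 0 ≤ x) (hy : 0 ≤ y) (hp : 0 ≤ p) (hp1 : p ≤ 1) :
    (x + y) ^ p ≤ x ^ p + y ^ p := by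
  lift x to NNReal using hx
  lift y to NNReal using hy
  have := NNReal.rpow_add_le_add_rpow x y hp hp1
  exact_mod_cast this

lemma gamma_integrand_integrable {α lam : ℝ} (hα0 : 0 < α) (hlam : 0 < lam) :
    IntegrableOn (fun u : ℝ => u ^ (α - 1) * Real.exp (-(lam * u))) (Ioi 0) := by
  have h0 : IntegrableOn (fun x : ℝ => Real.exp (-x) * x ^ (α - 1)) (Ioi 0) :=
    Real.GammaIntegral_convergent hα0
  have h1 : IntegrableOn (fun x : ℝ => Real.exp (-(lam * x)) * (lam * x) ^ (α - 1)) (Ioi 0) := by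
    have := (integrableOn_Ioi_comp_mul_left_iff
      (fun x : ℝ => Real.exp (-x) * x ^ (α - 1)) 0 hlam).2 (by simpa using h0)
    simpa using this
  have h2 := h1.const_mul ((lam ^ (α - 1))⁻¹)
  refine (integrableOn_congr_fun (fun x hx => ?_) measurableSet_Ioi).2 h2
  have hx0 : (0:ℝ) < x := hx
  rw [Real.mul_rpow hlam.le hx0.le]
  have : (lam ^ (α - 1)) ≠ 0 := ne_of_gt (Real.rpow_pos_of_pos hlam _)
  field_simp

lemma exp_kernel_bound {α lam t : ℝ} (hα0 : 0 < α) (hlam : 0 < lam) (ht : 0 ≤ t) :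
    ∫ τ in (0:ℝ)..t, (t - τ) ^ (α - 1) * Real.exp (lam * τ)
      ≤ Real.exp (lam * t) * ((1 / lam) ^ α * Real.Gamma α) := by
  have h1 := integral_comp_sub_left (a := (0:ℝ)) (b := t)
    (fun u : ℝ => u ^ (α - 1) * Real.exp (lam * (t - u))) t
  simp only [sub_sub_cancel, sub_zero, sub_self] at h1
  rw [h1]
  have h2 : ∀ u : ℝ, u ^ (α - 1) * Real.exp (lam * (t - u))
      = Real.exp (lam * t) * (u ^ (α - 1) * Real.exp (-(lam * u))) := by
    intro u
    rw [mul_sub, show lam * t - lam * u = lam * t + -(lam * u) by ring, Real.exp_add]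
    ring
  simp_rw [h2]
  rw [intervalIntegral.integral_const_mul, integral_of_le ht]
  have hmono : ∫ u in Ioc (0:ℝ) t, u ^ (α - 1) * Real.exp (-(lam * u))
      ≤ ∫ u in Ioi (0:ℝ), u ^ (α - 1) * Real.exp (-(lam * u)) := by
    refine setIntegral_mono_set (gamma_integrand_integrable hα0 hlam) ?_ ?_
    · refine (ae_restrict_iff' measurableSet_Ioi).2 (ae_of_all _ fun x hx => ?_)
      have : (0:ℝ) < x := hx
      positivity
    · exact HasSubset.Subset.eventuallyLE Ioc_subset_Ioi_self
  have hgamma : ∫ u in Ioi (0:ℝ), u ^ (α - 1) * Real.exp (-(lam * u))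
      = (1 / lam) ^ α * Real.Gamma α := Real.integral_rpow_mul_exp_neg_mul_Ioi hα0 hlam
  rw [← hgamma]
  have := Real.exp_pos (lam * t)
  exact mul_le_mul_of_nonneg_left hmono this.le



/-- Continuity from a Hölder-type bound. -/
lemma continuousOn_of_norm_sub_le {F : ℝ → E} {s : Set ℝ} {C β : ℝ} (hβ : 0 < β)
    (h : ∀ x ∈ s, ∀ y ∈ s, ‖F x - F y‖ ≤ C * |x - y| ^ β) : ContinuousOn F s := by
  intro x hx
  rw [ContinuousWithinAt, tendsto_iff_dist_tendsto_zero]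
  have hmaj : Filter.Tendsto (fun y => C * |y - x| ^ β) (nhdsWithin x s) (nhds 0) := by
    have hc : Continuous fun y : ℝ => C * |y - x| ^ β := by
      refine continuous_const.mul ?_
      exact ((continuous_id.sub continuous_const).abs).rpow_const (fun y => Or.inr hβ.le)
    have := hc.tendsto x
    simp only [sub_self, abs_zero, Real.zero_rpow hβ.ne', mul_zero] at this
    exact this.mono_left nhdsWithin_le_nhds
  refine squeeze_zero' ?_ ?_ hmaj
  · exact Filter.Eventually.of_forall fun y => dist_nonneg
  · filter_upwards [self_mem_nhdsWithin] with y hy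
    rw [dist_eq_norm]
    exact h y hy x hx

/-- Hölder estimate for the fractional integral of a bounded function. -/
lemma holder_est {α : ℝ} (hα0 : 0 < α) (hα1 : α < 1) {T M : ℝ} {g : ℝ → E}
    (hg : ContinuousOn g (Icc 0 T)) (hM : ∀ x ∈ Icc (0:ℝ) T, ‖g x‖ ≤ M)
    {s t : ℝ} (hs : s ∈ Icc (0:ℝ) T) (ht : t ∈ Icc (0:ℝ) T) (hst : s ≤ t) :
    ‖(∫ τ in (0:ℝ)..t, (t - τ) ^ (α - 1) • g τ) - ∫ τ in (0:ℝ)..s, (s - τ) ^ (α - 1) • g τ‖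
      ≤ (2 * M / α) * (t - s) ^ α := by
  have hM0 : 0 ≤ M := le_trans (norm_nonneg _) (hM 0 ⟨le_rfl, hs.1.trans hs.2⟩)
  have h0T : (0:ℝ) ∈ Icc (0:ℝ) T := ⟨le_rfl, hs.1.trans hs.2⟩
  have Int1 : IntervalIntegrable (fun τ => (t - τ) ^ (α - 1) • g τ) volume 0 s :=
    smul_int hα0 t (hg.mono (uIcc_subset_Icc h0T hs))
  have Int2 : IntervalIntegrable (fun τ => (t - τ) ^ (α - 1) • g τ) volume s t :=
    smul_int hα0 t (hg.mono (uIcc_subset_Icc hs ht))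
  have Int3 : IntervalIntegrable (fun τ => (s - τ) ^ (α - 1) • g τ) volume 0 s :=
    smul_int hα0 s (hg.mono (uIcc_subset_Icc h0T hs))
  have hsplit : (∫ τ in (0:ℝ)..t, (t - τ) ^ (α - 1) • g τ)
      = (∫ τ in (0:ℝ)..s, (t - τ) ^ (α - 1) • g τ) + ∫ τ in s..t, (t - τ) ^ (α - 1) • g τ :=
    (integral_add_adjacent_intervals Int1 Int2).symm
  have hA : (∫ τ in (0:ℝ)..s, (t - τ) ^ (α - 1) • g τ) - (∫ τ in (0:ℝ)..s, (s - τ) ^ (α - 1) • g τ)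
      = ∫ τ in (0:ℝ)..s, ((t - τ) ^ (α - 1) - (s - τ) ^ (α - 1)) • g τ := by
    rw [← integral_sub Int1 Int3]
    congr 1; ext τ; rw [sub_smul]
  -- bound on term A
  have hAle : ‖∫ τ in (0:ℝ)..s, ((t - τ) ^ (α - 1) - (s - τ) ^ (α - 1)) • g τ‖
      ≤ |∫ τ in (0:ℝ)..s, ((s - τ) ^ (α - 1) - (t - τ) ^ (α - 1)) * M| := by
    refine norm_integral_le_abs_of_norm_le ?_
      (((kernel_int hα0 s 0 s).sub (kernel_int hα0 t 0 s)).mul_const M)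
    have h1 : ∀ᵐ τ ∂(volume.restrict (Ι 0 s)), τ ∈ Set.Ioc 0 s := by
      rw [uIoc_of_le hs.1]
      exact ae_restrict_mem measurableSet_Ioc
    filter_upwards [h1, ae_ne_restrict _ s] with τ hτ hτs
    have hτs' : τ < s := lt_of_le_of_ne hτ.2 hτs
    have h0st : (0:ℝ) < s - τ := by linarith
    have hkle : (t - τ) ^ (α - 1) ≤ (s - τ) ^ (α - 1) :=
      Real.rpow_le_rpow_of_nonpos h0st (by linarith) (by linarith)
    have hknn : (0:ℝ) ≤ (t - τ) ^ (α - 1) := Real.rpow_nonneg (by linarith) _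
    rw [norm_smul, Real.norm_eq_abs, abs_of_nonpos (by linarith)]
    have hb := hM τ ⟨hτ.1.le, le_trans hτ.2 (le_trans hst ht.2)⟩
    have h2 : (0:ℝ) ≤ (s - τ) ^ (α - 1) - (t - τ) ^ (α - 1) := by linarith
    calc -((t - τ) ^ (α - 1) - (s - τ) ^ (α - 1)) * ‖g τ‖
        = ((s - τ) ^ (α - 1) - (t - τ) ^ (α - 1)) * ‖g τ‖ := by ring
      _ ≤ ((s - τ) ^ (α - 1) - (t - τ) ^ (α - 1)) * M := mul_le_mul_of_nonneg_left hb h2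
  -- compute the scalar integral in the A bound
  have hAval : (∫ τ in (0:ℝ)..s, ((s - τ) ^ (α - 1) - (t - τ) ^ (α - 1)) * M)
      = (s ^ α - (t ^ α - (t - s) ^ α)) / α * M := by
    rw [intervalIntegral.integral_mul_const,
      integral_sub (kernel_int hα0 s 0 s) (kernel_int hα0 t 0 s),
      kernel_integral hα0, kernel_integral hα0]
    rw [sub_zero, sub_self, sub_zero, Real.zero_rpow hα0.ne']
    ring
  -- bound on term B
  have hBle : ‖∫ τ in s..t, (t - τ) ^ (α - 1) • g τ‖ ≤ |∫ τ in s..t, (t - τ) ^ (α - 1) * M| := by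
    refine norm_integral_le_abs_of_norm_le ?_ ((kernel_int hα0 t s t).mul_const M)
    have h1 : ∀ᵐ τ ∂(volume.restrict (Ι s t)), τ ∈ Set.Ioc s t := by
      rw [uIoc_of_le hst]
      exact ae_restrict_mem measurableSet_Ioc
    filter_upwards [h1] with τ hτ
    have hknn : (0:ℝ) ≤ (t - τ) ^ (α - 1) := Real.rpow_nonneg (by linarith [hτ.2]) _
    rw [norm_smul, Real.norm_eq_abs, abs_of_nonneg hknn]
    exact mul_le_mul_of_nonneg_left
      (hM τ ⟨le_trans hs.1 hτ.1.le, le_trans hτ.2 ht.2⟩) hknn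
  have hBval : (∫ τ in s..t, (t - τ) ^ (α - 1) * M) = (t - s) ^ α / α * M := by
    rw [intervalIntegral.integral_mul_const, kernel_integral hα0, sub_self,
      Real.zero_rpow hα0.ne', sub_zero]
  have hts : (0:ℝ) ≤ t - s := by linarith
  have htsα : (0:ℝ) ≤ (t - s) ^ α := Real.rpow_nonneg hts _
  have hsadd : t ^ α ≤ s ^ α + (t - s) ^ α := by
    have := rpow_subadd hs.1 hts hα0.le hα1.le
    rwa [add_sub_cancel] at this
  have hmono : s ^ α ≤ t ^ α := Real.rpow_le_rpow hs.1 hst hα0.le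
  have habs1 : |(s ^ α - (t ^ α - (t - s) ^ α)) / α * M| ≤ (t - s) ^ α / α * M := by
    rw [abs_mul, abs_of_nonneg hM0, abs_div, abs_of_pos hα0]
    have h1 : |s ^ α - (t ^ α - (t - s) ^ α)| ≤ (t - s) ^ α := by
      rw [abs_le]; constructor <;> linarith
    gcongr
  have habs2 : |(t - s) ^ α / α * M| = (t - s) ^ α / α * M := by
    rw [abs_of_nonneg]; positivity
  have hdiff : (∫ τ in (0:ℝ)..t, (t - τ) ^ (α - 1) • g τ)
        - (∫ τ in (0:ℝ)..s, (s - τ) ^ (α - 1) • g τ)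
      = (∫ τ in (0:ℝ)..s, ((t - τ) ^ (α - 1) - (s - τ) ^ (α - 1)) • g τ)
        + ∫ τ in s..t, (t - τ) ^ (α - 1) • g τ := by
    rw [hsplit, ← hA]; abel
  rw [hdiff]
  calc ‖(∫ τ in (0:ℝ)..s, ((t - τ) ^ (α - 1) - (s - τ) ^ (α - 1)) • g τ)
        + ∫ τ in s..t, (t - τ) ^ (α - 1) • g τ‖
      ≤ ‖∫ τ in (0:ℝ)..s, ((t - τ) ^ (α - 1) - (s - τ) ^ (α - 1)) • g τ‖
        + ‖∫ τ in s..t, (t - τ) ^ (α - 1) • g τ‖ := norm_add_le _ _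
    _ ≤ (t - s) ^ α / α * M + (t - s) ^ α / α * M := by
        refine add_le_add (le_trans hAle ?_) (le_trans hBle ?_)
        · rw [hAval]; exact habs1
        · rw [hBval, habs2]
    _ = (2 * M / α) * (t - s) ^ α := by ring

/-- Continuity of the fractional integral of a function continuous on `[0,T]`. -/
lemma cont_integral {α : ℝ} (hα0 : 0 < α) (hα1 : α < 1) {T : ℝ} {g : ℝ → E}
    (hg : ContinuousOn g (Icc 0 T)) :
    ContinuousOn (fun t => ∫ τ in (0:ℝ)..t, (t - τ) ^ (α - 1) • g τ) (Icc (0:ℝ) T) := by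
  rcases le_or_gt T 0 with hT | hT
  · -- degenerate: Icc 0 T is a subsingleton
    rcases lt_or_eq_of_le hT with h | h
    · rw [Icc_eq_empty (by linarith)]; exact continuousOn_empty _
    · subst h
      rw [Icc_self]
      exact continuousOn_singleton _ _
  obtain ⟨M, hM⟩ := isCompact_Icc.exists_bound_of_continuousOn hg
  refine continuousOn_of_norm_sub_le hα0 (C := 2 * M / α) ?_
  intro x hx y hy
  rcases le_total y x with h | h
  · have := holder_est hα0 hα1 hg hM hy hx h
    rwa [abs_of_nonneg (by linarith)]
  · have := holder_est hα0 hα1 hg hM hx hy h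
    rw [← norm_neg, neg_sub] at this
    rwa [abs_of_nonpos (by linarith), neg_sub]

/-- Joint continuity of `τ ↦ f τ (U τ)`. -/
lemma g_cont {T : ℝ} {f : ℝ → E → E} {L : NNReal}
    (hcont : ∀ x, ContinuousOn (fun t => f t x) (Icc 0 T))
    (hlip : ∀ t, LipschitzWith L (f t)) {U : ℝ → E} (hU : ContinuousOn U (Icc 0 T)) :
    ContinuousOn (fun τ => f τ (U τ)) (Icc (0:ℝ) T) := by
  have hF : ContinuousOn (fun p : E × ℝ => f p.2 p.1) ((univ : Set E) ×ˢ Icc (0:ℝ) T) := by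
    refine continuousOn_prod_of_continuousOn_lipschitzOnWith (fun p : E × ℝ => f p.2 p.1) L
      (fun a _ => hcont a) (fun b hb => ?_)
    exact (hlip b).lipschitzOnWith
  have hpair : ContinuousOn (fun τ : ℝ => ((U τ, τ) : E × ℝ)) (Icc (0:ℝ) T) :=
    hU.prodMk (continuousOn_id)
  exact hF.comp hpair (fun τ hτ => ⟨mem_univ _, hτ⟩)

/-- The core weighted contraction estimate. -/
lemma core_est {α lam : ℝ} (hα0 : 0 < α) (hα1 : α < 1) (hlam : 0 < lam)
    {T : ℝ} {f : ℝ → E → E} {L : NNReal}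
    (hcont : ∀ x, ContinuousOn (fun t => f t x) (Icc 0 T))
    (hlip : ∀ t, LipschitzWith L (f t))
    {u v : ℝ → E} (hu : ContinuousOn u (Icc 0 T)) (hv : ContinuousOn v (Icc 0 T))
    {D : ℝ} (hD : 0 ≤ D)
    (huv : ∀ τ ∈ Icc (0:ℝ) T, ‖u τ - v τ‖ ≤ Real.exp (lam * τ) * D)
    {t : ℝ} (ht : t ∈ Icc (0:ℝ) T) :
    ‖(∫ τ in (0:ℝ)..t, (t - τ) ^ (α - 1) • f τ (u τ))
        - ∫ τ in (0:ℝ)..t, (t - τ) ^ (α - 1) • f τ (v τ)‖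
      ≤ (L : ℝ) * D * (Real.exp (lam * t) * ((1 / lam) ^ α * Real.Gamma α)) := by
  have h0T : (0:ℝ) ∈ Icc (0:ℝ) T := ⟨le_rfl, ht.1.trans ht.2⟩
  have hgu : ContinuousOn (fun τ => f τ (u τ)) (Icc (0:ℝ) T) := g_cont hcont hlip hu
  have hgv : ContinuousOn (fun τ => f τ (v τ)) (Icc (0:ℝ) T) := g_cont hcont hlip hv
  have Intu : IntervalIntegrable (fun τ => (t - τ) ^ (α - 1) • f τ (u τ)) volume 0 t :=
    smul_int hα0 t (hgu.mono (uIcc_subset_Icc h0T ht))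
  have Intv : IntervalIntegrable (fun τ => (t - τ) ^ (α - 1) • f τ (v τ)) volume 0 t :=
    smul_int hα0 t (hgv.mono (uIcc_subset_Icc h0T ht))
  rw [← integral_sub Intu Intv]
  have hrw : ∀ τ : ℝ, (t - τ) ^ (α - 1) • f τ (u τ) - (t - τ) ^ (α - 1) • f τ (v τ)
      = (t - τ) ^ (α - 1) • (f τ (u τ) - f τ (v τ)) := fun τ => (smul_sub _ _ _).symm
  simp_rw [hrw]
  have hmajInt : IntervalIntegrable
      (fun τ => (t - τ) ^ (α - 1) * ((L : ℝ) * (Real.exp (lam * τ) * D))) volume 0 t := by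
    refine (kernel_int hα0 t 0 t).mul_continuousOn ?_
    exact (continuous_const.mul ((Real.continuous_exp.comp
      (continuous_const.mul continuous_id)).mul continuous_const)).continuousOn
  have hnorm : ‖∫ τ in (0:ℝ)..t, (t - τ) ^ (α - 1) • (f τ (u τ) - f τ (v τ))‖
      ≤ |∫ τ in (0:ℝ)..t, (t - τ) ^ (α - 1) * ((L : ℝ) * (Real.exp (lam * τ) * D))| := by
    refine norm_integral_le_abs_of_norm_le ?_ hmajInt
    have h1 : ∀ᵐ τ ∂(volume.restrict (Ι 0 t)), τ ∈ Set.Ioc 0 t := by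
      rw [uIoc_of_le ht.1]
      exact ae_restrict_mem measurableSet_Ioc
    filter_upwards [h1] with τ hτ
    have hknn : (0:ℝ) ≤ (t - τ) ^ (α - 1) := Real.rpow_nonneg (by linarith [hτ.2]) _
    rw [norm_smul, Real.norm_eq_abs, abs_of_nonneg hknn]
    refine mul_le_mul_of_nonneg_left ?_ hknn
    have hfl : ‖f τ (u τ) - f τ (v τ)‖ ≤ (L : ℝ) * ‖u τ - v τ‖ := by
      have := (hlip τ).dist_le_mul (u τ) (v τ)
      simpa [dist_eq_norm] using this
    refine le_trans hfl (mul_le_mul_of_nonneg_left ?_ (NNReal.coe_nonneg L))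
    exact huv τ ⟨hτ.1.le, le_trans hτ.2 ht.2⟩
  have hval : (∫ τ in (0:ℝ)..t, (t - τ) ^ (α - 1) * ((L : ℝ) * (Real.exp (lam * τ) * D)))
      = (L : ℝ) * D * ∫ τ in (0:ℝ)..t, (t - τ) ^ (α - 1) * Real.exp (lam * τ) := by
    rw [← intervalIntegral.integral_const_mul]
    congr 1; ext τ; ring
  have hker_nonneg : (0:ℝ) ≤ ∫ τ in (0:ℝ)..t, (t - τ) ^ (α - 1) * Real.exp (lam * τ) := by
    refine intervalIntegral.integral_nonneg ht.1 (fun τ hτ => ?_)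
    have : (0:ℝ) ≤ (t - τ) ^ (α - 1) := Real.rpow_nonneg (by linarith [hτ.2]) _
    positivity
  rw [hval] at hnorm
  refine le_trans hnorm ?_
  rw [abs_mul, abs_of_nonneg (by positivity : (0:ℝ) ≤ (L:ℝ) * D), abs_of_nonneg hker_nonneg]
  exact mul_le_mul_of_nonneg_left (exp_kernel_bound hα0 hlam ht.1) (by positivity)

variable [CompleteSpace E]

/-- The Picard operator for the fractional Volterra equation. -/
noncomputable def Pmap {T α : ℝ} (hT : 0 ≤ T) (hα0 : 0 < α) (hα1 : α < 1)
    {f : ℝ → E → E} {L : NNReal}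
    (hcont : ∀ x, ContinuousOn (fun t => f t x) (Icc 0 T))
    (hlip : ∀ t, LipschitzWith L (f t))
    (x₀ : E) (u : C(Icc (0:ℝ) T, E)) : C(Icc (0:ℝ) T, E) :=
  ⟨fun t => x₀ + (1 / Real.Gamma α) •
      ∫ τ in (0:ℝ)..(t:ℝ), ((t:ℝ) - τ) ^ (α - 1) • f τ (u (projIcc 0 T hT τ)), by
    have hU : ContinuousOn (fun τ : ℝ => u (projIcc 0 T hT τ)) (Icc 0 T) :=
      (u.continuous.comp (continuous_projIcc)).continuousOn
    have hg := g_cont hcont hlip hU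
    have hI := cont_integral hα0 hα1 hg
    have : ContinuousOn (fun t : ℝ => x₀ + (1 / Real.Gamma α) •
        ∫ τ in (0:ℝ)..t, (t - τ) ^ (α - 1) • f τ (u (projIcc 0 T hT τ))) (Icc 0 T) :=
      continuousOn_const.add (hI.const_smul _)
    exact this.restrict⟩

/-- Multiplication by the weight `exp (-(lam * t))`. -/
noncomputable def Phi {T : ℝ} (lam : ℝ) (u : C(Icc (0:ℝ) T, E)) : C(Icc (0:ℝ) T, E) :=
  ⟨fun t => Real.exp (-(lam * (t:ℝ))) • u t,
    (Real.continuous_exp.comp ((continuous_const.mul continuous_subtype_val).neg)).smul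
      u.continuous⟩

/-- Multiplication by the weight `exp (lam * t)`. -/
noncomputable def Psi {T : ℝ} (lam : ℝ) (u : C(Icc (0:ℝ) T, E)) : C(Icc (0:ℝ) T, E) :=
  ⟨fun t => Real.exp (lam * (t:ℝ)) • u t,
    (Real.continuous_exp.comp (continuous_const.mul continuous_subtype_val)).smul u.continuous⟩

lemma Psi_Phi {T : ℝ} (lam : ℝ) (u : C(Icc (0:ℝ) T, E)) : Psi lam (Phi lam u) = u := by
  ext t
  simp only [Psi, Phi, ContinuousMap.coe_mk, smul_smul, ← Real.exp_add]
  simp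

lemma Phi_Psi {T : ℝ} (lam : ℝ) (u : C(Icc (0:ℝ) T, E)) : Phi lam (Psi lam u) = u := by
  ext t
  simp only [Psi, Phi, ContinuousMap.coe_mk, smul_smul, ← Real.exp_add]
  simp

theorem master (T : ℝ) (hT : 0 < T) (α : ℝ) (hα0 : 0 < α) (hα1 : α < 1)
    (f : ℝ → E → E) (L : NNReal)
    (hcont : ∀ x, ContinuousOn (fun t => f t x) (Set.Icc 0 T))
    (hlip : ∀ t, LipschitzWith L (f t)) :
    ∃ sol : E → ℝ → E,
      (∀ x₀, ContinuousOn (sol x₀) (Set.Icc 0 T) ∧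
        ∀ t ∈ Set.Icc (0:ℝ) T,
          sol x₀ t = x₀ + (1 / Real.Gamma α) •
            ∫ τ in (0:ℝ)..t, (t - τ) ^ (α - 1) • f τ (sol x₀ τ)) ∧
      (∀ x₀ (y : ℝ → E),
        (ContinuousOn y (Set.Icc 0 T) ∧
          ∀ t ∈ Set.Icc (0:ℝ) T,
            y t = x₀ + (1 / Real.Gamma α) •
              ∫ τ in (0:ℝ)..t, (t - τ) ^ (α - 1) • f τ (y τ)) →
        ∀ t ∈ Set.Icc (0:ℝ) T, y t = sol x₀ t) ∧
      (∀ t ∈ Set.Icc (0:ℝ) T, Continuous (fun x₀ => sol x₀ t)) := by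
  classical
  haveI : Nonempty C(Icc (0:ℝ) T, E) := ⟨0⟩
  have hΓ : 0 < Real.Gamma α := Real.Gamma_pos_of_pos hα0
  set lam : ℝ := (2 * (L:ℝ) + 1) ^ (α⁻¹) with hlam_def
  have hlam : 0 < lam := Real.rpow_pos_of_pos (by positivity) _
  have hlamα : lam ^ α = 2 * (L:ℝ) + 1 := by
    rw [hlam_def, ← Real.rpow_mul (by positivity), inv_mul_cancel₀ hα0.ne', Real.rpow_one]
  have h1lam : (1 / lam) ^ α = 1 / (2 * (L:ℝ) + 1) := by
    rw [Real.div_rpow (by norm_num) hlam.le, Real.one_rpow, hlamα]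
  set q : NNReal := L / (2 * L + 1) with hq_def
  have hqc : (q : ℝ) = (L:ℝ) / (2 * (L:ℝ) + 1) := by
    rw [hq_def]; push_cast; ring
  have hq1 : q < 1 := by
    have h : (q : ℝ) < 1 := by
      rw [hqc, div_lt_one (by positivity)]
      linarith [L.coe_nonneg]
    exact_mod_cast h
  set P : E → C(Icc (0:ℝ) T, E) → C(Icc (0:ℝ) T, E) := Pmap hT.le hα0 hα1 hcont hlip
    with hP_def
  set Q : E → C(Icc (0:ℝ) T, E) → C(Icc (0:ℝ) T, E) :=
    fun x₀ v => Phi lam (P x₀ (Psi lam v)) with hQ_def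
  -- the key pointwise estimate for the weighted picard operator
  have hPdist : ∀ (x₀ : E) (u u' : C(Icc (0:ℝ) T, E)) (t : Icc (0:ℝ) T),
      ‖P x₀ u t - P x₀ u' t‖ ≤ (1 / Real.Gamma α) *
        ((L:ℝ) * dist (Phi lam u) (Phi lam u') *
          (Real.exp (lam * (t:ℝ)) * ((1 / lam) ^ α * Real.Gamma α))) := by
    intro x₀ u u' t
    have hcore := core_est (E := E) hα0 hα1 hlam hcont hlip
      (u := fun τ : ℝ => u (projIcc 0 T hT.le τ)) (v := fun τ : ℝ => u' (projIcc 0 T hT.le τ))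
      ((u.continuous.comp continuous_projIcc).continuousOn)
      ((u'.continuous.comp continuous_projIcc).continuousOn)
      (dist_nonneg (x := Phi lam u) (y := Phi lam u'))
      (fun τ hτ => by
        show ‖u (projIcc 0 T hT.le τ) - u' (projIcc 0 T hT.le τ)‖
          ≤ Real.exp (lam * τ) * dist (Phi lam u) (Phi lam u')
        rw [projIcc_of_mem hT.le hτ]
        have h1 : u ⟨τ, hτ⟩ - u' ⟨τ, hτ⟩ =
            Real.exp (lam * τ) • ((Phi lam u) ⟨τ, hτ⟩ - (Phi lam u') ⟨τ, hτ⟩) := by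
          simp only [Phi, ContinuousMap.coe_mk, smul_sub, smul_smul, ← Real.exp_add]
          simp
        rw [h1, norm_smul, Real.norm_eq_abs, Real.abs_exp]
        refine mul_le_mul_of_nonneg_left ?_ (Real.exp_pos _).le
        rw [← dist_eq_norm]
        exact ContinuousMap.dist_apply_le_dist _)
      t.2
    have hPu : P x₀ u t - P x₀ u' t = (1 / Real.Gamma α) •
        ((∫ τ in (0:ℝ)..(t:ℝ), ((t:ℝ) - τ) ^ (α - 1) • f τ (u (projIcc 0 T hT.le τ))) -
          ∫ τ in (0:ℝ)..(t:ℝ), ((t:ℝ) - τ) ^ (α - 1) • f τ (u' (projIcc 0 T hT.le τ))) := by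
      simp only [hP_def, Pmap, ContinuousMap.coe_mk, add_sub_add_left_eq_sub, smul_sub]
      exact add_sub_add_left_eq_sub _ _ _
    rw [hPu, norm_smul, Real.norm_eq_abs, abs_of_pos (by positivity)]
    exact mul_le_mul_of_nonneg_left hcore (by positivity)
  -- contraction
  have hQ : ∀ x₀ : E, ContractingWith q (Q x₀) := by
    intro x₀
    refine ⟨hq1, LipschitzWith.of_dist_le_mul fun v w => ?_⟩
    rw [ContinuousMap.dist_le (mul_nonneg q.coe_nonneg dist_nonneg)]
    intro t
    have hvw : dist (Phi lam (Psi lam v)) (Phi lam (Psi lam w)) = dist v w := by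
      rw [Phi_Psi, Phi_Psi]
    have h1 : dist (Q x₀ v t) (Q x₀ w t)
        = Real.exp (-(lam * (t:ℝ))) * ‖P x₀ (Psi lam v) t - P x₀ (Psi lam w) t‖ := by
      simp only [hQ_def, Phi, ContinuousMap.coe_mk, dist_eq_norm, ← smul_sub, norm_smul,
        Real.norm_eq_abs, Real.abs_exp]
    rw [h1]
    have h2 := hPdist x₀ (Psi lam v) (Psi lam w) t
    rw [hvw] at h2
    calc Real.exp (-(lam * (t:ℝ))) * ‖P x₀ (Psi lam v) t - P x₀ (Psi lam w) t‖
        ≤ Real.exp (-(lam * (t:ℝ))) * ((1 / Real.Gamma α) *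
            ((L:ℝ) * dist v w * (Real.exp (lam * (t:ℝ)) * ((1 / lam) ^ α * Real.Gamma α)))) :=
          mul_le_mul_of_nonneg_left h2 (Real.exp_pos _).le
      _ = (q : ℝ) * dist v w := by
          rw [h1lam, hqc, Real.exp_neg]
          have hE := (Real.exp_pos (lam * (t:ℝ))).ne'
          field_simp
  -- the solution
  set sol : E → ℝ → E := fun x₀ t =>
    Psi lam (ContractingWith.fixedPoint (Q x₀) (hQ x₀)) (projIcc 0 T hT.le t) with hsol_def
  have hfixP : ∀ x₀ : E,
      P x₀ (Psi lam (ContractingWith.fixedPoint (Q x₀) (hQ x₀)))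
        = Psi lam (ContractingWith.fixedPoint (Q x₀) (hQ x₀)) := by
    intro x₀
    have h := (hQ x₀).fixedPoint_isFixedPt
    calc P x₀ (Psi lam (ContractingWith.fixedPoint (Q x₀) (hQ x₀)))
        = Psi lam (Phi lam (P x₀ (Psi lam (ContractingWith.fixedPoint (Q x₀) (hQ x₀))))) :=
          (Psi_Phi _ _).symm
      _ = Psi lam (ContractingWith.fixedPoint (Q x₀) (hQ x₀)) := by
          rw [show Phi lam (P x₀ (Psi lam (ContractingWith.fixedPoint (Q x₀) (hQ x₀))))
            = Q x₀ (ContractingWith.fixedPoint (Q x₀) (hQ x₀)) from rfl, h]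
  refine ⟨sol, fun x₀ => ⟨?_, ?_⟩, ?_, ?_⟩
  · -- continuity of sol x₀
    exact ((Psi lam (ContractingWith.fixedPoint (Q x₀) (hQ x₀))).continuous.comp
      continuous_projIcc).continuousOn
  · -- the integral equation
    intro t ht
    have hproj : projIcc 0 T hT.le t = ⟨t, ht⟩ := projIcc_of_mem hT.le ht
    show Psi lam (ContractingWith.fixedPoint (Q x₀) (hQ x₀)) (projIcc 0 T hT.le t) = _
    rw [hproj, ← hfixP x₀]
    simp only [hP_def, Pmap, ContinuousMap.coe_mk]
    rfl
  · -- uniqueness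
    rintro x₀ y ⟨hy_cont, hy_eq⟩ t ht
    set Y : C(Icc (0:ℝ) T, E) := ⟨fun t => y (t:ℝ), hy_cont.restrict⟩ with hY_def
    have hPY : P x₀ Y = Y := by
      ext s
      show x₀ + (1 / Real.Gamma α) •
          (∫ τ in (0:ℝ)..(s:ℝ), ((s:ℝ) - τ) ^ (α - 1) • f τ (Y (projIcc 0 T hT.le τ)))
        = y (s:ℝ)
      have hcongr : (∫ τ in (0:ℝ)..(s:ℝ), ((s:ℝ) - τ) ^ (α - 1) • f τ (Y (projIcc 0 T hT.le τ)))
          = ∫ τ in (0:ℝ)..(s:ℝ), ((s:ℝ) - τ) ^ (α - 1) • f τ (y τ) := by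
        refine intervalIntegral.integral_congr ?_
        intro τ hτ
        rw [uIcc_of_le s.2.1] at hτ
        have hτT : τ ∈ Icc (0:ℝ) T := ⟨hτ.1, hτ.2.trans s.2.2⟩
        show ((s:ℝ) - τ) ^ (α - 1) • f τ (Y (projIcc 0 T hT.le τ))
          = ((s:ℝ) - τ) ^ (α - 1) • f τ (y τ)
        rw [projIcc_of_mem hT.le hτT]
        rfl
      rw [hcongr, ← hy_eq (s:ℝ) s.2]
    have hYfix : Q x₀ (Phi lam Y) = Phi lam Y := by
      show Phi lam (P x₀ (Psi lam (Phi lam Y))) = Phi lam Y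
      rw [Psi_Phi, hPY]
    have hYeq : Phi lam Y = ContractingWith.fixedPoint (Q x₀) (hQ x₀) :=
      (hQ x₀).fixedPoint_unique hYfix
    have hYU : Y = Psi lam (ContractingWith.fixedPoint (Q x₀) (hQ x₀)) := by
      rw [← hYeq, Psi_Phi]
    show y t = Psi lam (ContractingWith.fixedPoint (Q x₀) (hQ x₀)) (projIcc 0 T hT.le t)
    rw [projIcc_of_mem hT.le ht, ← hYU]
    rfl
  · -- continuous dependence
    intro t ht
    have hq1R : (0:ℝ) < 1 - q := (hQ (0:E)).one_sub_K_pos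
    set C : ℝ := Real.exp (lam * T) / (1 - (q:ℝ)) with hC_def
    have hC0 : 0 ≤ C := by positivity
    refine (LipschitzWith.of_dist_le_mul (K := Real.toNNReal C)
      (f := fun x₀ => sol x₀ t) fun x₀ x₁ => ?_).continuous
    rw [Real.coe_toNNReal _ hC0]
    have hfg : ∀ z, dist (Q x₀ z) (Q x₁ z) ≤ dist x₀ x₁ := by
      intro z
      rw [ContinuousMap.dist_le dist_nonneg]
      intro s
      have h1 : dist (Q x₀ z s) (Q x₁ z s)
          = Real.exp (-(lam * (s:ℝ))) * ‖P x₀ (Psi lam z) s - P x₁ (Psi lam z) s‖ := by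
        simp only [hQ_def, Phi, ContinuousMap.coe_mk, dist_eq_norm, ← smul_sub, norm_smul,
          Real.norm_eq_abs, Real.abs_exp]
      have h2 : P x₀ (Psi lam z) s - P x₁ (Psi lam z) s = x₀ - x₁ := by
        simp only [hP_def, Pmap, ContinuousMap.coe_mk, add_sub_add_right_eq_sub]
        exact add_sub_add_right_eq_sub _ _ _
      rw [h1, h2, dist_eq_norm]
      have hexp : Real.exp (-(lam * (s:ℝ))) ≤ 1 := by
        rw [← Real.exp_zero]
        exact Real.exp_le_exp.2 (by nlinarith [s.2.1, hlam.le])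
      exact mul_le_of_le_one_left (norm_nonneg _) hexp
    have hfix_dist : dist (ContractingWith.fixedPoint (Q x₀) (hQ x₀))
        (ContractingWith.fixedPoint (Q x₁) (hQ x₁)) ≤ dist x₀ x₁ / (1 - (q:ℝ)) :=
      (hQ x₀).fixedPoint_lipschitz_in_map (hQ x₁) hfg
    have hp : projIcc 0 T hT.le t = ⟨t, ht⟩ := projIcc_of_mem hT.le ht
    have hd : dist (sol x₀ t) (sol x₁ t)
        = Real.exp (lam * t) * dist (ContractingWith.fixedPoint (Q x₀) (hQ x₀) ⟨t, ht⟩)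
            (ContractingWith.fixedPoint (Q x₁) (hQ x₁) ⟨t, ht⟩) := by
      simp only [hsol_def, hp, Psi, ContinuousMap.coe_mk, dist_eq_norm, ← smul_sub, norm_smul,
        Real.norm_eq_abs, Real.abs_exp]
    rw [hd]
    calc Real.exp (lam * t) * dist (ContractingWith.fixedPoint (Q x₀) (hQ x₀) ⟨t, ht⟩)
          (ContractingWith.fixedPoint (Q x₁) (hQ x₁) ⟨t, ht⟩)
        ≤ Real.exp (lam * T) * (dist x₀ x₁ / (1 - (q:ℝ))) := by
          refine mul_le_mul (Real.exp_le_exp.2 (by nlinarith [ht.2, hlam.le]))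
            (le_trans (ContinuousMap.dist_apply_le_dist _) hfix_dist) dist_nonneg
            (Real.exp_pos _).le
      _ = C * dist x₀ x₁ := by rw [hC_def]; ring

end FracVolterra


open MeasureTheory intervalIntegral

/-- For `f : [0,T] × ℝⁿ → ℝⁿ` continuous in `t` and globally Lipschitz in `x`,
the fractional Volterra equation
`x(t) = x₀ + (1/Γ(α)) ∫_0^t (t-τ)^{α-1} f(τ, x(τ)) dτ` (with `0 < α < 1`) has a
unique continuous solution on `[0,T]`, depending continuously on `x₀`. -/
theorem fractional_volterra_wellposed
    (n : ℕ) (T : ℝ) (hT : 0 < T) (α : ℝ) (hα0 : 0 < α) (hα1 : α < 1)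
    (f : ℝ → EuclideanSpace ℝ (Fin n) → EuclideanSpace ℝ (Fin n))
    (L : NNReal)
    (hcont : ∀ x, ContinuousOn (fun t => f t x) (Set.Icc 0 T))
    (hlip : ∀ t, LipschitzWith L (f t)) :
    ∃ sol : EuclideanSpace ℝ (Fin n) → ℝ → EuclideanSpace ℝ (Fin n),
      (∀ x₀, ContinuousOn (sol x₀) (Set.Icc 0 T) ∧
        ∀ t ∈ Set.Icc (0:ℝ) T,
          sol x₀ t = x₀ + (1 / Real.Gamma α) •
            ∫ τ in (0:ℝ)..t, (t - τ) ^ (α - 1) • f τ (sol x₀ τ)) ∧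
      (∀ x₀ (y : ℝ → EuclideanSpace ℝ (Fin n)),
        (ContinuousOn y (Set.Icc 0 T) ∧
          ∀ t ∈ Set.Icc (0:ℝ) T,
            y t = x₀ + (1 / Real.Gamma α) •
              ∫ τ in (0:ℝ)..t, (t - τ) ^ (α - 1) • f τ (y τ)) →
        ∀ t ∈ Set.Icc (0:ℝ) T, y t = sol x₀ t) ∧
      (∀ t ∈ Set.Icc (0:ℝ) T, Continuous (fun x₀ => sol x₀ t)) := by
  exact FracVolterra.master T hT α hα0 hα1 f L hcont hlip
end

section
/- Fractional Grönwall inequality: let 0 < α < 1, a ≥ 0, b ≥ 0, and let u : [0,T] → [0,∞) be continuous with u(t) ≤ a + (b/Γ(α)) ∫_0^t (t-τ)^{α-1} u(τ) dτ for all t ∈ [0,T]. Then u(t) ≤ a · E_α(b t^α) for all t ∈ [0,T], where E_α is the one-parameter Mittag–Leffler function. -/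
set_option maxHeartbeats 1000000

open MeasureTheory intervalIntegral

/-- One-parameter Mittag–Leffler function (real argument). -/
noncomputable def mittagLeffler (α : ℝ) (z : ℝ) : ℝ :=
  ∑' k : ℕ, z ^ k / Real.Gamma (α * k + 1)

lemma ml_summable {α z c : ℝ} (hα : 0 < α) (hz : 0 ≤ z) (hc : 1 ≤ c) :
    Summable (fun k : ℕ => z ^ k / Real.Gamma (α * k + c)) := by
  set n : ℕ := ⌈1/α⌉₊ + 1 with hn
  have hn0 : 0 < n := Nat.succ_pos _
  haveI : NeZero n := ⟨hn0.ne'⟩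
  set w : ℝ := max z 1 with hw
  have hw1 : 1 ≤ w := le_max_right _ _
  set M : ℝ := w ^ n with hM
  have hM1 : 1 ≤ M := one_le_pow₀ hw1
  set h : ℕ → ℝ := fun q => M ^ (q + 1) / q.factorial with hh
  have hhsum : Summable h := by
    have := (Real.summable_pow_div_factorial M).mul_left M
    refine this.congr fun q => ?_
    simp [hh, pow_succ, mul_div_assoc]
    ring
  have hcomp : Summable (fun k : ℕ => h (k / n)) := by
    have h2 : Summable (fun p : ℕ × Fin n => h p.1 * (1:ℝ)) :=
      hhsum.mul_of_nonneg (hasSum_fintype (fun _ : Fin n => (1:ℝ))).summable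
        (fun q => by positivity) (fun _ => zero_le_one)
    have h3 : Summable (fun p : ℕ × Fin n => h p.1) := by simpa using h2
    have := (Nat.divModEquiv n).summable_iff.mpr h3
    exact this.congr fun k => rfl
  have hαn : 1 ≤ α * n := by
    have : 1/α ≤ (n:ℝ) := by
      have := Nat.le_ceil (1/α)
      have : (⌈1/α⌉₊ : ℝ) ≤ n := by exact_mod_cast Nat.le_succ _
      linarith [Nat.le_ceil (1/α)]
    calc (1:ℝ) = α * (1/α) := by field_simp
    _ ≤ α * n := by nlinarith
  -- shifted comparison
  refine (summable_nat_add_iff n).mp ?_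
  have hbound : ∀ k : ℕ, z ^ (k+n) / Real.Gamma (α * ((k+n : ℕ) : ℝ) + c) ≤ h ((k+n)/n) := by
    intro k
    set m : ℕ := k + n with hm
    set q : ℕ := m / n with hq
    have hq1 : 1 ≤ q := (Nat.one_le_div_iff hn0).mpr (Nat.le_add_left n k)
    have hqm : (q : ℝ) ≤ α * m := by
      have h1 : (q : ℝ) ≤ (m : ℝ) / n := Nat.cast_div_le
      have h2 : (m : ℝ) / n ≤ α * m := by
        rw [div_le_iff₀ (by positivity)]
        nlinarith [Nat.cast_nonneg (α := ℝ) m]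
      linarith
    have hnum : z ^ m ≤ M ^ (q + 1) := by
      calc z ^ m ≤ w ^ m := pow_le_pow_left₀ hz (le_max_left _ _) m
      _ ≤ w ^ (n * (q + 1)) := by
          apply pow_le_pow_right₀ hw1
          have h1 : n * q + m % n = m := Nat.div_add_mod m n
          have h2 : m % n < n := Nat.mod_lt _ hn0
          calc m = n*q + m % n := h1.symm
          _ ≤ n*q + n := by omega
          _ = n*(q+1) := by ring
      _ = M ^ (q + 1) := by rw [hM, ← pow_mul]
    have hGamma : (q.factorial : ℝ) ≤ Real.Gamma (α * m + c) := by
      have e1 : Real.Gamma ((q:ℝ) + 1) = q.factorial := Real.Gamma_nat_eq_factorial q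
      rw [← e1]
      have h2q : (2:ℝ) ≤ (q:ℝ) + 1 := by
        have : (1:ℝ) ≤ q := by exact_mod_cast hq1
        linarith
      have hle : (q:ℝ) + 1 ≤ α * m + c := by
        have := hqm; linarith
      exact Real.Gamma_strictMonoOn_Ici.monotoneOn h2q (le_trans h2q hle) hle
    have hΓpos : 0 < Real.Gamma (α * m + c) :=
      lt_of_lt_of_le (by positivity) hGamma
    calc z ^ m / Real.Gamma (α * m + c) ≤ M ^ (q+1) / q.factorial :=
      div_le_div₀ (by positivity) hnum (by positivity) hGamma
    _ = h q := rfl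
  refine Summable.of_nonneg_of_le (fun k => ?_) (fun k => hbound k) ?_
  · have hΓpos : 0 < Real.Gamma (α * ((k+n:ℕ):ℝ) + c) := by
      apply Real.Gamma_pos_of_pos
      have : (0:ℝ) ≤ α * ((k+n:ℕ):ℝ) := mul_nonneg hα.le (Nat.cast_nonneg _)
      linarith
    exact div_nonneg (pow_nonneg hz _) hΓpos.le
  · exact (summable_nat_add_iff n).mpr hcomp

lemma real_beta {p q : ℝ} (hp : 0 < p) (hq : 0 < q) :
    ∫ x in (0:ℝ)..1, x ^ (p-1) * (1-x) ^ (q-1)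
      = Real.Gamma p * Real.Gamma q / Real.Gamma (p+q) := by
  have hB : Complex.betaIntegral p q
      = ((∫ x in (0:ℝ)..1, x ^ (p-1) * (1-x) ^ (q-1) : ℝ) : ℂ) := by
    rw [Complex.betaIntegral, ← intervalIntegral.integral_ofReal]
    apply intervalIntegral.integral_congr
    intro x hx
    rw [Set.uIcc_of_le (by norm_num : (0:ℝ) ≤ 1)] at hx
    obtain ⟨hx0, hx1⟩ := hx
    dsimp only
    push_cast
    rw [Complex.ofReal_cpow hx0, Complex.ofReal_cpow (by linarith : (0:ℝ) ≤ 1-x)]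
    push_cast
    ring
  have key := Complex.Gamma_mul_Gamma_eq_betaIntegral
    (s := (p:ℂ)) (t := (q:ℂ)) (by simpa using hp) (by simpa using hq)
  rw [hB, ← Complex.ofReal_add, Complex.Gamma_ofReal, Complex.Gamma_ofReal,
    Complex.Gamma_ofReal, ← Complex.ofReal_mul, ← Complex.ofReal_mul] at key
  have hreal := Complex.ofReal_injective key
  have hΓ : Real.Gamma (p+q) ≠ 0 := (Real.Gamma_pos_of_pos (by linarith)).ne'
  field_simp
  linarith [hreal]

lemma scaled_beta {p q t : ℝ} (hp : 0 < p) (hq : 0 < q) (ht : 0 < t) :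
    ∫ τ in (0:ℝ)..t, (t-τ) ^ (p-1) * τ ^ (q-1)
      = Real.Gamma p * Real.Gamma q / Real.Gamma (p+q) * t ^ (p+q-1) := by
  have h1 := intervalIntegral.integral_comp_mul_right
    (a := (0:ℝ)) (b := 1) (fun τ => (t-τ) ^ (p-1) * τ ^ (q-1)) ht.ne'
  simp only [zero_mul, one_mul, smul_eq_mul] at h1
  have h2 : (∫ x in (0:ℝ)..1, (t - x*t) ^ (p-1) * (x*t) ^ (q-1))
      = t ^ (p-1) * t ^ (q-1) * ∫ x in (0:ℝ)..1, x ^ (q-1) * (1-x) ^ (p-1) := by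
    rw [← intervalIntegral.integral_const_mul]
    apply intervalIntegral.integral_congr
    intro x hx
    rw [Set.uIcc_of_le (by norm_num : (0:ℝ) ≤ 1)] at hx
    obtain ⟨hx0, hx1⟩ := hx
    dsimp only
    have e1 : t - x*t = t * (1-x) := by ring
    have e2 : x*t = t * x := by ring
    rw [e1, e2, Real.mul_rpow ht.le (by linarith), Real.mul_rpow ht.le hx0]
    ring
  rw [h2, real_beta hq hp] at h1
  have h3 : (∫ τ in (0:ℝ)..t, (t-τ) ^ (p-1) * τ ^ (q-1))
      = t * (t ^ (p-1) * t ^ (q-1) * (Real.Gamma q * Real.Gamma p / Real.Gamma (q+p))) := by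
    rw [h1]; field_simp
  rw [h3]
  have e : t * (t ^ (p-1) * t ^ (q-1)) = t ^ (p+q-1) := by
    rw [show t ^ (p-1) * t ^ (q-1) = t ^ (p+q-2) by rw [← Real.rpow_add ht]; ring_nf]
    nth_rewrite 1 [← Real.rpow_one t]
    rw [← Real.rpow_add ht]; ring_nf
  rw [show t * (t ^ (p-1) * t ^ (q-1) * (Real.Gamma q * Real.Gamma p / Real.Gamma (q+p)))
      = (t * (t ^ (p-1) * t ^ (q-1))) * (Real.Gamma p * Real.Gamma q / Real.Gamma (p+q))
      from by rw [add_comm q p]; ring]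
  rw [e]; ring

noncomputable def Efun (α b : ℝ) : ℝ → ℝ :=
  fun t => ∑' k : ℕ, b ^ k * t ^ (α * k) / Real.Gamma (α * k + 1)

lemma Efun_term_eq {α b t : ℝ} (ht : 0 ≤ t) (k : ℕ) :
    b ^ k * t ^ (α * k) / Real.Gamma (α * k + 1)
      = (b * t ^ α) ^ k / Real.Gamma (α * k + 1) := by
  rw [mul_pow, ← Real.rpow_natCast (t ^ α) k, ← Real.rpow_mul ht]

lemma Efun_summable {α b t : ℝ} (hα : 0 < α) (hb : 0 ≤ b) (ht : 0 ≤ t) :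
    Summable (fun k : ℕ => b ^ k * t ^ (α * k) / Real.Gamma (α * k + 1)) := by
  refine (ml_summable hα (z := b * t ^ α) (by positivity) le_rfl).congr fun k => ?_
  rw [Efun_term_eq ht]

lemma Efun_eq_ml {α b t : ℝ} (ht : 0 ≤ t) :
    Efun α b t = mittagLeffler α (b * t ^ α) :=
  tsum_congr fun k => Efun_term_eq ht k

lemma Efun_one_le {α b t : ℝ} (hα : 0 < α) (hb : 0 ≤ b) (ht : 0 ≤ t) :
    1 ≤ Efun α b t := by
  have h0 : b ^ 0 * t ^ (α * (0:ℕ)) / Real.Gamma (α * (0:ℕ) + 1) = 1 := by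
    norm_num [Real.Gamma_one]
  have := Summable.le_tsum (Efun_summable hα hb ht) 0 (fun k _ => by
    have : 0 < Real.Gamma (α * k + 1) := Real.Gamma_pos_of_pos (by positivity)
    positivity)
  rw [h0] at this
  exact this

lemma Efun_zero {α b : ℝ} (hα : 0 < α) : Efun α b 0 = 1 := by
  rw [Efun]
  rw [tsum_eq_single 0]
  · norm_num [Real.Gamma_one]
  · intro k hk
    have hk' : (0:ℝ) < α * k := by
      have : (1:ℝ) ≤ (k:ℝ) := by exact_mod_cast Nat.one_le_iff_ne_zero.mpr hk
      nlinarith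
    rw [Real.zero_rpow hk'.ne']
    simp

lemma Efun_continuousOn {α b T : ℝ} (hα : 0 < α) (hb : 0 ≤ b) (hT : 0 < T) :
    ContinuousOn (Efun α b) (Set.Icc 0 T) := by
  apply continuousOn_tsum (u := fun k : ℕ => b ^ k * T ^ (α * k) / Real.Gamma (α * k + 1))
  · intro k
    apply ContinuousOn.div_const
    apply ContinuousOn.mul continuousOn_const
    apply Continuous.continuousOn
    rw [continuous_iff_continuousAt]
    intro x
    exact Real.continuousAt_rpow_const x _ (Or.inr (by positivity))
  · exact Efun_summable hα hb hT.le
  · intro k t ht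
    obtain ⟨ht0, htT⟩ := ht
    have hΓ : 0 < Real.Gamma (α * k + 1) := Real.Gamma_pos_of_pos (by positivity)
    rw [Real.norm_of_nonneg (by positivity)]
    have hrp : t ^ (α * k) ≤ T ^ (α * k) := Real.rpow_le_rpow ht0 htT (by positivity)
    gcongr

lemma kernel_intble {α t : ℝ} (hα0 : 0 < α) (ht : 0 ≤ t) {f : ℝ → ℝ}
    (hf : ContinuousOn f (Set.Icc 0 t)) :
    IntervalIntegrable (fun τ => (t-τ) ^ (α-1) * f τ) volume 0 t := by
  have h1 : IntervalIntegrable (fun τ : ℝ => (t-τ) ^ (α-1)) volume 0 t := by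
    have h0 := intervalIntegrable_rpow' (a := (0:ℝ)) (b := t) (by linarith : (-1:ℝ) < α-1)
    have h2 := h0.comp_sub_left t
    simp only [sub_zero, sub_self] at h2
    exact h2.symm
  exact h1.mul_continuousOn (by rwa [Set.uIcc_of_le ht])

lemma E_integral {α b : ℝ} (hα0 : 0 < α) (hα1 : α < 1) (hb : 0 ≤ b) {t : ℝ} (ht : 0 < t) :
    ∫ τ in (0:ℝ)..t, (t-τ) ^ (α-1) * Efun α b τ
      = Real.Gamma α * ∑' k : ℕ, b ^ k * t ^ (α * (k+1)) / Real.Gamma (α * (k+1) + 1) := by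
  set F : ℕ → ℝ → ℝ := fun k τ => (t-τ) ^ (α-1) * (b ^ k * τ ^ (α * k) / Real.Gamma (α * k + 1))
    with hF
  have hFint : ∀ k : ℕ, Integrable (F k) (volume.restrict (Set.Ioc 0 t)) := by
    intro k
    rw [← IntegrableOn, ← intervalIntegrable_iff_integrableOn_Ioc_of_le ht.le]
    apply kernel_intble hα0 ht.le
    apply ContinuousOn.div_const
    apply ContinuousOn.mul continuousOn_const
    apply Continuous.continuousOn
    rw [continuous_iff_continuousAt]
    intro x
    exact Real.continuousAt_rpow_const x _ (Or.inr (by positivity))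
  have hFnonneg : ∀ k : ℕ, ∀ τ ∈ Set.Ioc (0:ℝ) t, 0 ≤ F k τ := by
    intro k τ hτ
    have h1 : (0:ℝ) ≤ t - τ := by linarith [hτ.2]
    have h2 : (0:ℝ) ≤ τ := hτ.1.le
    have hΓ : 0 < Real.Gamma (α * k + 1) := Real.Gamma_pos_of_pos (by positivity)
    positivity
  have hFval : ∀ k : ℕ, ∫ τ in Set.Ioc (0:ℝ) t, F k τ
      = Real.Gamma α * b ^ k * t ^ (α * (k+1)) / Real.Gamma (α * (k+1) + 1) := by
    intro k
    rw [← intervalIntegral.integral_of_le ht.le]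
    have hΓk : 0 < Real.Gamma (α * k + 1) := Real.Gamma_pos_of_pos (by positivity)
    have e1 : ∀ τ : ℝ, F k τ
        = (b ^ k / Real.Gamma (α * k + 1)) * ((t-τ) ^ (α-1) * τ ^ ((α * k + 1) - 1)) := by
      intro τ; rw [hF]; ring_nf
    simp_rw [e1]
    rw [intervalIntegral.integral_const_mul,
      scaled_beta hα0 (by positivity : (0:ℝ) < α * k + 1) ht]
    have e2 : α + (α * k + 1) - 1 = α * (k+1) := by push_cast; ring
    have e3 : α + (α * k + 1) = α * (k+1) + 1 := by push_cast; ring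
    rw [e2, e3]
    field_simp
  have hnorm_sum : Summable (fun k : ℕ => ∫ τ in Set.Ioc (0:ℝ) t, ‖F k τ‖) := by
    have he : ∀ k : ℕ, (∫ τ in Set.Ioc (0:ℝ) t, ‖F k τ‖)
        = Real.Gamma α * b ^ k * t ^ (α * (k+1)) / Real.Gamma (α * (k+1) + 1) := by
      intro k
      rw [← hFval k]
      apply setIntegral_congr_fun measurableSet_Ioc
      intro τ hτ
      exact Real.norm_of_nonneg (hFnonneg k τ hτ)
    simp_rw [he]
    -- rewrite as const * (z^k / Γ(αk + (α+1)))
    have := (ml_summable (α := α) (z := b * t ^ α) (c := α + 1) hα0 (by positivity)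
      (by linarith)).mul_left (Real.Gamma α * t ^ α)
    refine this.congr fun k => ?_
    have e4 : t ^ (α * ((k:ℝ)+1)) = t ^ (α * k) * t ^ α := by
      rw [← Real.rpow_add ht]; ring_nf
    have e5 : α * ((k:ℝ)+1) + 1 = α * k + (α + 1) := by ring
    rw [e4, e5, mul_pow, ← Real.rpow_natCast (t ^ α) k, ← Real.rpow_mul ht.le]
    ring
  have hswap := MeasureTheory.integral_tsum_of_summable_integral_norm hFint hnorm_sum
  have hE : ∀ τ : ℝ, (t-τ) ^ (α-1) * Efun α b τ = ∑' k : ℕ, F k τ := by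
    intro τ
    rw [Efun, hF, ← tsum_mul_left]
  rw [intervalIntegral.integral_of_le ht.le]
  calc ∫ τ in Set.Ioc (0:ℝ) t, (t-τ) ^ (α-1) * Efun α b τ
      = ∫ τ in Set.Ioc (0:ℝ) t, ∑' k : ℕ, F k τ := by simp_rw [hE]
    _ = ∑' k : ℕ, ∫ τ in Set.Ioc (0:ℝ) t, F k τ := hswap.symm
    _ = ∑' k : ℕ, Real.Gamma α * b ^ k * t ^ (α * (k+1)) / Real.Gamma (α * (k+1) + 1) := by
        exact tsum_congr hFval
    _ = Real.Gamma α * ∑' k : ℕ, b ^ k * t ^ (α * (k+1)) / Real.Gamma (α * (k+1) + 1) := by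
        rw [← tsum_mul_left]
        exact tsum_congr fun k => by ring

lemma E_identity {α b : ℝ} (hα0 : 0 < α) (hα1 : α < 1) (hb : 0 ≤ b) {t : ℝ} (ht : 0 ≤ t) :
    b * ∫ τ in (0:ℝ)..t, (t-τ) ^ (α-1) * Efun α b τ
      = Real.Gamma α * (Efun α b t - 1) := by
  rcases eq_or_lt_of_le ht with h0 | hpos
  · rw [← h0, intervalIntegral.integral_same, Efun_zero hα0]
    ring
  rw [E_integral hα0 hα1 hb hpos]
  have hsum := Efun_summable (t := t) hα0 hb ht
  have hshift := Summable.tsum_eq_zero_add hsum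
  have h00 : b ^ 0 * t ^ (α * (0:ℕ)) / Real.Gamma (α * (0:ℕ) + 1) = 1 := by
    norm_num [Real.Gamma_one]
  rw [h00] at hshift
  have : Efun α b t - 1
      = ∑' k : ℕ, b ^ (k+1) * t ^ (α * ((k:ℝ)+1)) / Real.Gamma (α * ((k:ℝ)+1) + 1) := by
    rw [Efun, hshift]
    have : ∀ k : ℕ, b ^ (k+1) * t ^ (α * ((k+1:ℕ):ℝ)) / Real.Gamma (α * ((k+1:ℕ):ℝ) + 1)
        = b ^ (k+1) * t ^ (α * ((k:ℝ)+1)) / Real.Gamma (α * ((k:ℝ)+1) + 1) := by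
      intro k; push_cast; ring_nf
    rw [tsum_congr this]
    ring
  rw [this, ← tsum_mul_left, ← tsum_mul_left, ← tsum_mul_left]
  apply tsum_congr
  intro k
  rw [pow_succ]
  ring

lemma comparison
    (T : ℝ) (hT : 0 < T) (α : ℝ) (hα0 : 0 < α) (hα1 : α < 1)
    (a b : ℝ) (ha : 0 ≤ a) (hb : 0 ≤ b)
    (u : ℝ → ℝ) (hu : ContinuousOn u (Set.Icc 0 T))
    (hpos : ∀ t ∈ Set.Icc (0:ℝ) T, 0 ≤ u t)
    (hineq : ∀ t ∈ Set.Icc (0:ℝ) T,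
      u t ≤ a + (b / Real.Gamma α) * ∫ τ in (0:ℝ)..t, (t - τ) ^ (α - 1) * u τ)
    (ε : ℝ) (hε : 0 < ε) :
    ∀ t ∈ Set.Icc (0:ℝ) T, u t ≤ (a + ε) * Efun α b t := by
  by_contra hcon
  push_neg at hcon
  obtain ⟨t₀, ht₀, ht₀'⟩ := hcon
  set v : ℝ → ℝ := fun t => (a + ε) * Efun α b t with hv
  set S : Set ℝ := {t ∈ Set.Icc 0 T | v t < u t} with hS
  have hSne : S.Nonempty := ⟨t₀, ht₀, ht₀'⟩
  have hSbdd : BddBelow S := ⟨0, fun x hx => hx.1.1⟩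
  set s : ℝ := sInf S with hs
  have hscl : s ∈ closure S := csInf_mem_closure hSne hSbdd
  have hSsub : S ⊆ Set.Icc 0 T := fun x hx => hx.1
  have hsIcc : s ∈ Set.Icc 0 T :=
    (closure_minimal hSsub isClosed_Icc) hscl
  have hΓα : 0 < Real.Gamma α := Real.Gamma_pos_of_pos hα0
  have hEcont : ContinuousOn (Efun α b) (Set.Icc 0 T) := Efun_continuousOn hα0 hb hT
  -- u s ≥ v s by continuity
  have hvs : v s ≤ u s := by
    have hc : ContinuousOn (fun x => u x - v x) (Set.Icc 0 T) :=
      hu.sub (continuousOn_const.mul hEcont)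
    have hcwa : ContinuousWithinAt (fun x => u x - v x) S s :=
      ((hc.continuousWithinAt hsIcc).mono hSsub)
    haveI : (nhdsWithin s S).NeBot := mem_closure_iff_nhdsWithin_neBot.mp hscl
    have hge : 0 ≤ u s - v s := by
      refine ge_of_tendsto hcwa ?_
      filter_upwards [eventually_mem_nhdsWithin] with x hx
      exact le_of_lt (sub_pos.mpr hx.2)
    linarith
  -- below s, u ≤ v
  have hbelow : ∀ τ ∈ Set.Icc (0:ℝ) T, τ < s → u τ ≤ v τ := by
    intro τ hτ hτs
    by_contra hcc
    push_neg at hcc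
    exact absurd (csInf_le hSbdd ⟨hτ, hcc⟩) (not_le.mpr hτs)
  -- integral comparison
  have hs0 : 0 ≤ s := hsIcc.1
  have husub : ContinuousOn u (Set.Icc 0 s) :=
    hu.mono (Set.Icc_subset_Icc le_rfl hsIcc.2)
  have hvsub : ContinuousOn (Efun α b) (Set.Icc 0 s) :=
    hEcont.mono (Set.Icc_subset_Icc le_rfl hsIcc.2)
  have hIu : IntervalIntegrable (fun τ => (s - τ) ^ (α - 1) * u τ) volume 0 s :=
    kernel_intble hα0 hs0 husub
  have hIv : IntervalIntegrable (fun τ => (s - τ) ^ (α - 1) * v τ) volume 0 s :=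
    kernel_intble hα0 hs0 (continuousOn_const.mul hvsub)
  have hint_mono : (∫ τ in (0:ℝ)..s, (s - τ) ^ (α - 1) * u τ)
      ≤ ∫ τ in (0:ℝ)..s, (s - τ) ^ (α - 1) * v τ := by
    rw [intervalIntegral.integral_of_le hs0, intervalIntegral.integral_of_le hs0]
    apply setIntegral_mono_ae_restrict
      ((intervalIntegrable_iff_integrableOn_Ioc_of_le hs0).mp hIu)
      ((intervalIntegrable_iff_integrableOn_Ioc_of_le hs0).mp hIv)
    have h1 : ∀ᵐ (τ : ℝ) ∂volume, τ ≠ s := by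
      rw [MeasureTheory.ae_iff]
      have : {τ : ℝ | ¬ τ ≠ s} = {s} := by ext x; simp
      rw [this]
      exact measure_singleton s
    filter_upwards [ae_restrict_of_ae h1, ae_restrict_mem measurableSet_Ioc] with τ hne hmem
    have hτs : τ < s := lt_of_le_of_ne hmem.2 hne
    have hτIcc : τ ∈ Set.Icc (0:ℝ) T := ⟨hmem.1.le, le_trans hmem.2 hsIcc.2⟩
    have hker : (0:ℝ) ≤ (s - τ) ^ (α - 1) := by
      apply Real.rpow_nonneg; linarith [hmem.2]
    exact mul_le_mul_of_nonneg_left (hbelow τ hτIcc hτs) hker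
  -- the chain
  have hEs : b * ∫ τ in (0:ℝ)..s, (s - τ) ^ (α - 1) * Efun α b τ
      = Real.Gamma α * (Efun α b s - 1) := E_identity hα0 hα1 hb hs0
  have hchain : u s ≤ v s - ε := by
    have h1 := hineq s hsIcc
    have h2 : (b / Real.Gamma α) * (∫ τ in (0:ℝ)..s, (s - τ) ^ (α - 1) * u τ)
        ≤ (b / Real.Gamma α) * ∫ τ in (0:ℝ)..s, (s - τ) ^ (α - 1) * v τ :=
      mul_le_mul_of_nonneg_left hint_mono (by positivity)
    have h3 : (∫ τ in (0:ℝ)..s, (s - τ) ^ (α - 1) * v τ)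
        = (a + ε) * ∫ τ in (0:ℝ)..s, (s - τ) ^ (α - 1) * Efun α b τ := by
      rw [← intervalIntegral.integral_const_mul]
      apply intervalIntegral.integral_congr
      intro τ _
      dsimp only [hv]
      ring
    have h4 : (b / Real.Gamma α) * ∫ τ in (0:ℝ)..s, (s - τ) ^ (α - 1) * v τ
        = (a + ε) * (Efun α b s - 1) := by
      rw [h3]
      have : (b / Real.Gamma α) * ((a + ε) * ∫ τ in (0:ℝ)..s, (s - τ) ^ (α - 1) * Efun α b τ)
          = ((a + ε) / Real.Gamma α) * (b * ∫ τ in (0:ℝ)..s, (s - τ) ^ (α - 1) * Efun α b τ) := by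
        ring
      rw [this, hEs]
      field_simp
    have : u s ≤ a + (a + ε) * (Efun α b s - 1) := by
      calc u s ≤ a + (b / Real.Gamma α) * ∫ τ in (0:ℝ)..s, (s - τ) ^ (α - 1) * u τ := h1
      _ ≤ a + (b / Real.Gamma α) * ∫ τ in (0:ℝ)..s, (s - τ) ^ (α - 1) * v τ := by linarith
      _ = a + (a + ε) * (Efun α b s - 1) := by rw [h4]
    have hv_expand : v s = (a + ε) * Efun α b s := rfl
    nlinarith [this]
  linarith [hvs, hchain]

/-- Fractional Grönwall inequality: if `u ≥ 0` is continuous on `[0,T]` and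
`u(t) ≤ a + (b/Γ(α)) ∫_0^t (t-τ)^{α-1} u(τ) dτ`, then `u(t) ≤ a · E_α(b t^α)`. -/
theorem fractional_gronwall
    (T : ℝ) (hT : 0 < T) (α : ℝ) (hα0 : 0 < α) (hα1 : α < 1)
    (a b : ℝ) (ha : 0 ≤ a) (hb : 0 ≤ b)
    (u : ℝ → ℝ) (hu : ContinuousOn u (Set.Icc 0 T))
    (hpos : ∀ t ∈ Set.Icc (0:ℝ) T, 0 ≤ u t)
    (hineq : ∀ t ∈ Set.Icc (0:ℝ) T,
      u t ≤ a + (b / Real.Gamma α) * ∫ τ in (0:ℝ)..t, (t - τ) ^ (α - 1) * u τ) :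
    ∀ t ∈ Set.Icc (0:ℝ) T, u t ≤ a * mittagLeffler α (b * t ^ α) := by
  intro t ht
  have hE1 : 1 ≤ Efun α b t := Efun_one_le hα0 hb ht.1
  have hEpos : 0 < Efun α b t := by linarith
  rw [← Efun_eq_ml ht.1]
  by_contra hcon
  push_neg at hcon
  set δ : ℝ := u t - a * Efun α b t with hδ
  have hδpos : 0 < δ := by simp only [hδ]; linarith
  have hε : 0 < δ / (2 * Efun α b t) := by positivity
  have hcomp := comparison T hT α hα0 hα1 a b ha hb u hu hpos hineq _ hε t ht
  have h2 : (a + δ / (2 * Efun α b t)) * Efun α b t = a * Efun α b t + δ / 2 := by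
    field_simp
  rw [h2] at hcomp
  simp only [hδ] at hcomp
  linarith
end
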